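/- arXiv:1508.00474 — 11 statements merged into one kernel-verified Lean document; each statement's English description precedes it below -/
import Mathlib

section
/- Let K ⊆ ℝⁿ be a convex open set containing 0, and let ψ: ℝⁿ → ℝ ∪ {+∞} be convex with ψ(0) < 0 and K ⊆ dom(ψ) ⊆ closure(K). If ψ_ℓ: ℝⁿ → ℝ ∪ {+∞} satisfy ψ_ℓ(0) < 0 and ψ_ℓ → ψ pointwise on K, then for every x₀ ∈ ℝⁿ, ψ*(x₀) ≤ liminf_{ℓ→∞} ψ_ℓ*(x₀). -/
open MeasureTheory Filter
open scoped ENNReal RealInnerProductSpace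

noncomputable section

abbrev En (n : ℕ) := EuclideanSpace ℝ (Fin n)

/-- Legendre transform of an `EReal`-valued function: `ψ*(y) = sup_{x ∈ dom ψ} (⟨x,y⟩ - ψ x)`. -/
def legendre {n : ℕ} (ψ : En n → EReal) (y : En n) : EReal :=
  ⨆ x : {x : En n // ψ x < ⊤}, ((⟪x.1, y⟫ : ℝ) : EReal) - ψ x.1

/-- Convexity for `ℝ ∪ {+∞}`-valued functions. -/
def EConvexOn {n : ℕ} (ψ : En n → EReal) : Prop :=
  ∀ x y : En n, ∀ a b : ℝ, 0 ≤ a → 0 ≤ b → a + b = 1 →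
    ψ (a • x + b • y) ≤ (a : EReal) * ψ x + (b : EReal) * ψ y

/-- `t ^ (-s)` with the conventions `0^(-s) = ∞`, `∞^(-s) = 0` (for `s > 0`). -/
def negPow (t : EReal) (s : ℝ) : ℝ≥0∞ :=
  if t = ⊤ then 0 else if t ≤ 0 then ⊤ else ENNReal.ofReal (t.toReal ^ (-s))

/-- `I_p(ψ) = (∫ (ψ*)^{-(n+p)})^{-1/p} ∈ [0,∞]`. -/
def Ip (n : ℕ) (p : ℝ) (ψ : En n → EReal) : ℝ≥0∞ :=
  (∫⁻ x, negPow (legendre ψ x) ((n : ℝ) + p)) ^ (-(1 : ℝ) / p)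

/-!
Every point `x` of `dom ψ ⊆ closure K` is the limit of the points `a • x` (`a ↑ 1`) of `K`,
and convexity together with `ψ 0 ≤ 0` gives `ψ (a • x) ≤ a ψ x`. Hence
`⟪a • x, x₀⟫ - ψ (a • x) ≥ a (⟪x, x₀⟫ - ψ x)`, so `ψ*(x₀)` is already the supremum over `K`.
On `K` each term `⟪y, x₀⟫ - ψ y` is the limit of `⟪y, x₀⟫ - ψ_ℓ y ≤ ψ_ℓ*(x₀)`.
-/

theorem Convex.smul_mem_interior_of_zero_mem_interior {E : Type*} [AddCommGroup E] [Module ℝ E]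
    [TopologicalSpace E] [IsTopologicalAddGroup E] [ContinuousConstSMul ℝ E] {K : Set E}
    (hK : Convex ℝ K) (h0 : (0 : E) ∈ interior K) {x : E} (hx : x ∈ closure K) {a : ℝ}
    (ha₀ : 0 ≤ a) (ha₁ : a < 1) : a • x ∈ interior K := by
  simpa using
    hK.combo_interior_closure_mem_interior h0 hx (sub_pos.2 ha₁) ha₀ (sub_add_cancel 1 a)

theorem EReal.le_of_forall_lt_one_mul_le {z c : EReal}
    (h : ∀ a : ℝ, 0 < a → a < 1 → (a : EReal) * z ≤ c) : z ≤ c := by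
  have hmul : Tendsto (fun a : ℝ => (a : EReal) * z) (nhds 1) (nhds z) := by
    have hcont : ContinuousAt (fun p : EReal × EReal => p.1 * p.2) ((1 : ℝ), z) :=
      EReal.continuousAt_mul (.inl (by exact_mod_cast one_ne_zero))
        (.inl (by exact_mod_cast one_ne_zero)) (.inl (EReal.coe_ne_bot 1))
        (.inl (EReal.coe_ne_top 1))
    have h := hcont.tendsto.comp ((continuous_coe_real_ereal.prodMk continuous_const).tendsto 1)
    rwa [EReal.coe_one, one_mul] at h
  refine le_of_tendsto (hmul.mono_left (nhdsWithin_le_nhds (s := Set.Iio 1))) ?_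
  filter_upwards [Ioo_mem_nhdsLT one_pos] with a ha using h a ha.1 ha.2

theorem EReal.continuousAt_coe_sub (r : ℝ) (t : EReal) :
    ContinuousAt (fun u : EReal => (r : EReal) - u) t := by
  have h := (EReal.continuousAt_add (p := ((r : EReal), -t)) (.inl (EReal.coe_ne_top r))
    (.inl (EReal.coe_ne_bot r))).comp (f := fun u : EReal => ((r : EReal), -u)) (x := t)
    (continuous_const.prodMk continuous_neg).continuousAt
  simpa only [Function.comp_def, sub_eq_add_neg] using h

namespace EConvexOn

variable {n : ℕ} {ψ : En n → EReal}

theorem le_smul_mul (hψ : EConvexOn ψ) (hψ0 : ψ 0 ≤ 0) (x : En n) {a : ℝ} (ha₀ : 0 ≤ a)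
    (ha₁ : a ≤ 1) : ψ (a • x) ≤ a * ψ x := by
  have h := hψ x 0 a (1 - a) ha₀ (sub_nonneg.2 ha₁) (add_sub_cancel a 1)
  rw [smul_zero, add_zero] at h
  calc ψ (a • x) ≤ a * ψ x + ((1 - a : ℝ) : EReal) * ψ 0 := h
    _ ≤ a * ψ x + 0 := by
      gcongr
      exact mul_nonpos_of_nonneg_of_nonpos (by exact_mod_cast sub_nonneg.2 ha₁) hψ0
    _ = a * ψ x := add_zero _

theorem mul_inner_sub_le_inner_smul_sub (hψ : EConvexOn ψ) (hψ0 : ψ 0 ≤ 0) (x x₀ : En n)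
    {a : ℝ} (ha₀ : 0 ≤ a) (ha₁ : a ≤ 1) :
    (a : EReal) * ((⟪x, x₀⟫ : ℝ) - ψ x) ≤ ((⟪a • x, x₀⟫ : ℝ) : EReal) - ψ (a • x) := by
  rw [EReal.mul_sub_of_nonneg_of_ne_top (by exact_mod_cast ha₀) (EReal.coe_ne_top a),
    real_inner_smul_left, EReal.coe_mul]
  exact EReal.sub_le_sub le_rfl (hψ.le_smul_mul hψ0 x ha₀ ha₁)

end EConvexOn

section Legendre

variable {n : ℕ} {ψ : En n → EReal}

theorem inner_sub_le_legendre {y : En n} (hy : ψ y < ⊤) (x₀ : En n) :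
    ((⟪y, x₀⟫ : ℝ) : EReal) - ψ y ≤ legendre ψ x₀ :=
  le_iSup (fun x : {x : En n // ψ x < ⊤} => ((⟪x.1, x₀⟫ : ℝ) : EReal) - ψ x.1) ⟨y, hy⟩

theorem legendre_le_of_forall_mem {K : Set (En n)} (hK : Convex ℝ K)
    (h0K : (0 : En n) ∈ interior K) (hψ : EConvexOn ψ) (hψ0 : ψ 0 ≤ 0)
    (hdom : {x | ψ x < ⊤} ⊆ closure K) {x₀ : En n} {c : EReal}
    (h : ∀ y ∈ K, ((⟪y, x₀⟫ : ℝ) : EReal) - ψ y ≤ c) : legendre ψ x₀ ≤ c := by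
  refine iSup_le fun ⟨x, hx⟩ => EReal.le_of_forall_lt_one_mul_le fun a ha₀ ha₁ => ?_
  calc (a : EReal) * ((⟪x, x₀⟫ : ℝ) - ψ x)
      ≤ ((⟪a • x, x₀⟫ : ℝ) : EReal) - ψ (a • x) :=
        hψ.mul_inner_sub_le_inner_smul_sub hψ0 x x₀ ha₀.le ha₁.le
    _ ≤ c := h _ <| interior_subset <|
        hK.smul_mem_interior_of_zero_mem_interior h0K (hdom hx) ha₀.le ha₁

theorem inner_sub_le_liminf_legendre {ι : Type*} {l : Filter ι} [l.NeBot]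
    {ψs : ι → En n → EReal} {y : En n} (hy : ψ y < ⊤)
    (hψs : Tendsto (fun i => ψs i y) l (nhds (ψ y))) (x₀ : En n) :
    ((⟪y, x₀⟫ : ℝ) : EReal) - ψ y ≤ l.liminf fun i => legendre (ψs i) x₀ := by
  rw [← ((EReal.continuousAt_coe_sub ⟪y, x₀⟫ (ψ y)).tendsto.comp hψs).liminf_eq]
  refine liminf_le_liminf ?_
  filter_upwards [hψs.eventually_lt_const hy] with i hi using inner_sub_le_legendre hi x₀

end Legendre

theorem statement3_general {n : ℕ} (K : Set (En n)) (hKconv : Convex ℝ K) (hKopen : IsOpen K)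
    (h0K : (0 : En n) ∈ K) (ψ : En n → EReal) (hconv : EConvexOn ψ) (hψ0 : ψ 0 < 0)
    (hdom₁ : K ⊆ {x | ψ x < ⊤}) (hdom₂ : {x | ψ x < ⊤} ⊆ closure K)
    (ψs : ℕ → En n → EReal)
    (hptwise : ∀ x ∈ K, Tendsto (fun ℓ => ψs ℓ x) atTop (nhds (ψ x))) (x₀ : En n) :
    legendre ψ x₀ ≤ atTop.liminf (fun ℓ => legendre (ψs ℓ) x₀) :=
  legendre_le_of_forall_mem hKconv (hKopen.interior_eq.symm ▸ h0K) hconv hψ0.le hdom₂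
    fun y hy => inner_sub_le_liminf_legendre (hdom₁ hy) (hptwise y hy) x₀

theorem statement3 {n : ℕ} (K : Set (En n)) (hKconv : Convex ℝ K) (hKopen : IsOpen K)
    (h0K : (0 : En n) ∈ K) (ψ : En n → EReal) (hconv : EConvexOn ψ) (hψ0 : ψ 0 < 0)
    (hdom₁ : K ⊆ {x | ψ x < ⊤}) (hdom₂ : {x | ψ x < ⊤} ⊆ closure K)
    (ψs : ℕ → En n → EReal) (hs0 : ∀ ℓ, ψs ℓ 0 < 0)
    (hptwise : ∀ x ∈ K, Tendsto (fun ℓ => ψs ℓ x) atTop (nhds (ψ x))) (x₀ : En n) :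
    legendre ψ x₀ ≤ atTop.liminf (fun ℓ => legendre (ψs ℓ) x₀) :=
  statement3_general K hKconv hKopen h0K ψ hconv hψ0 hdom₁ hdom₂ ψs hptwise x₀
end
end

section
/- Let μ be a Borel probability measure on ℝⁿ with 0 in the interior of the convex hull of supp(μ). Then there exist constants c₁, c₂ > 0 such that for every unit vector θ ∈ S^{n−1}, ∫_{ℝⁿ} ⟨x, θ⟩ · 1_{⟨x,θ⟩ > c₁} dμ(x) ≥ c₂. -/
/-! The function `θ ↦ ∫ ⟨x, θ⟩⁺ dμ` is Lipschitz (with constant `∫ ‖x‖ dμ`) and, because `0` is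
interior to the convex hull of the support, positive on the unit sphere; by compactness it is
bounded below there by some `m > 0`. Since `⟨x, θ⟩ 1_{⟨x,θ⟩ > c} ≥ ⟨x, θ⟩⁺ - c` pointwise for
`c ≥ 0`, the choice `c₁ = c₂ = m / 2` works. -/

open MeasureTheory Filter
open scoped ENNReal RealInnerProductSpace

noncomputable section

/-- The support of a Borel measure: points all of whose open neighborhoods have positive
measure. -/
def msupport {n : ℕ} (μ : Measure (En n)) : Set (En n) :=
  {x | ∀ U : Set (En n), IsOpen U → x ∈ U → 0 < μ U}

section InnerProductSpace

variable {E : Type*} [NormedAddCommGroup E] [InnerProductSpace ℝ E]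

lemma max_inner_sub_le_indicator {c : ℝ} (hc : 0 ≤ c) (θ x : E) :
    max ⟪x, θ⟫ 0 - c ≤ Set.indicator {x : E | c < ⟪x, θ⟫} (fun x => ⟪x, θ⟫) x := by
  by_cases hx : c < ⟪x, θ⟫
  · rw [Set.indicator_of_mem (by exact hx), max_eq_left (by linarith)]
    linarith
  · rw [Set.indicator_of_notMem (by exact hx)]
    exact sub_nonpos.mpr (max_le (not_lt.mp hx) hc)

variable [MeasurableSpace E] [OpensMeasurableSpace E] {μ : Measure E}

def posInnerMoment (μ : Measure E) (θ : E) : ℝ :=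
  ∫ x, max ⟪x, θ⟫ 0 ∂μ

lemma integrable_inner_left (hmom : Integrable (fun x : E => ‖x‖) μ) (θ : E) :
    Integrable (fun x : E => ⟪x, θ⟫) μ := by
  refine (hmom.mul_const ‖θ‖).mono' (by fun_prop) (Eventually.of_forall fun x => ?_)
  simpa only [Real.norm_eq_abs] using abs_real_inner_le_norm x θ

lemma lipschitzWith_posInnerMoment (hmom : Integrable (fun x : E => ‖x‖) μ) :
    LipschitzWith (∫ x, ‖x‖ ∂μ).toNNReal (posInnerMoment μ) := by
  refine LipschitzWith.of_dist_le_mul fun θ θ' => ?_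
  have hint : ∀ θ, Integrable (fun x => max ⟪x, θ⟫ 0) μ :=
    fun θ => (integrable_inner_left hmom θ).pos_part
  rw [Real.dist_eq, dist_eq_norm, posInnerMoment, posInnerMoment,
    ← integral_sub (hint θ) (hint θ')]
  calc |∫ x, (max ⟪x, θ⟫ 0 - max ⟪x, θ'⟫ 0) ∂μ|
      ≤ ∫ x, |max ⟪x, θ⟫ 0 - max ⟪x, θ'⟫ 0| ∂μ := abs_integral_le_integral_abs
    _ ≤ ∫ x, ‖x‖ * ‖θ - θ'‖ ∂μ := by
        refine integral_mono ((hint θ).sub (hint θ')).abs (hmom.mul_const _) fun x => ?_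
        calc |max ⟪x, θ⟫ 0 - max ⟪x, θ'⟫ 0| ≤ |⟪x, θ⟫ - ⟪x, θ'⟫| := abs_max_sub_max_le_abs _ _ _
          _ = |⟪x, θ - θ'⟫| := by rw [inner_sub_right]
          _ ≤ ‖x‖ * ‖θ - θ'‖ := abs_real_inner_le_norm _ _
    _ = (∫ x, ‖x‖ ∂μ) * ‖θ - θ'‖ := integral_mul_const _ _
    _ ≤ (∫ x, ‖x‖ ∂μ).toNNReal * ‖θ - θ'‖ := by gcongr; exact Real.le_coe_toNNReal _

lemma posInnerMoment_sub_le_integral_indicator [IsProbabilityMeasure μ]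
    (hmom : Integrable (fun x : E => ‖x‖) μ) {c : ℝ} (hc : 0 ≤ c) (θ : E) :
    posInnerMoment μ θ - c ≤ ∫ x, Set.indicator {x : E | c < ⟪x, θ⟫} (fun x => ⟪x, θ⟫) x ∂μ := by
  have hmeas : MeasurableSet {x : E | c < ⟪x, θ⟫} :=
    (isOpen_lt continuous_const (by fun_prop)).measurableSet
  have hint := (integrable_inner_left hmom θ).pos_part
  calc posInnerMoment μ θ - c = ∫ x, (max ⟪x, θ⟫ 0 - c) ∂μ := by
        rw [integral_sub hint (integrable_const c), integral_const, probReal_univ, one_smul,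
          posInnerMoment]
    _ ≤ _ := integral_mono (hint.sub (integrable_const c))
        ((integrable_inner_left hmom θ).indicator hmeas) (max_inner_sub_le_indicator hc θ)

end InnerProductSpace

lemma exists_mem_msupport_inner_pos {n : ℕ} {μ : Measure (En n)}
    (h0 : (0 : En n) ∈ interior (convexHull ℝ (msupport μ))) {θ : En n} (hθ : θ ≠ 0) :
    ∃ x₀ ∈ msupport μ, 0 < ⟪x₀, θ⟫ := by
  by_contra! hc
  have hlin : IsLinearMap ℝ fun x : En n => ⟪x, θ⟫ :=
    ⟨fun x y => inner_add_left x y θ, fun a x => real_inner_smul_left x θ a⟩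
  have hhalf : convexHull ℝ (msupport μ) ⊆ {x : En n | ⟪x, θ⟫ ≤ 0} :=
    convexHull_min hc (convex_halfSpace_le hlin 0)
  obtain ⟨ε, hε, hball⟩ := Metric.mem_nhds_iff.mp (mem_interior_iff_mem_nhds.mp h0)
  have hθpos : 0 < ‖θ‖ := norm_pos_iff.mpr hθ
  have hmem : (ε / (2 * ‖θ‖)) • θ ∈ Metric.ball (0 : En n) ε := by
    rw [mem_ball_zero_iff, norm_smul, Real.norm_of_nonneg (by positivity)]
    field_simp
    linarith
  have hle := hhalf (hball hmem)
  rw [Set.mem_ofPred_eq, real_inner_smul_left, real_inner_self_eq_norm_sq] at hle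
  exact hle.not_gt (mul_pos (by positivity) (pow_pos hθpos 2))

lemma posInnerMoment_pos_of_mem_msupport {n : ℕ} {μ : Measure (En n)}
    (hmom : Integrable (fun x : En n => ‖x‖) μ) {θ x₀ : En n} (hx₀ : x₀ ∈ msupport μ)
    (hθ : 0 < ⟪x₀, θ⟫) : 0 < posInnerMoment μ θ := by
  have hsupp : Function.support (fun x : En n => max ⟪x, θ⟫ 0) = {x | 0 < ⟪x, θ⟫} := by
    ext x
    simp [Function.mem_support]
  have hnonneg : 0 ≤ fun x : En n => max ⟪x, θ⟫ 0 := fun x => le_max_right _ _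
  rw [posInnerMoment, integral_pos_iff_support_of_nonneg hnonneg
    (integrable_inner_left hmom θ).pos_part, hsupp]
  exact hx₀ _ (isOpen_lt continuous_const (by fun_prop)) hθ

theorem statement5 {n : ℕ} (μ : Measure (En n)) [IsProbabilityMeasure μ]
    (hmom : Integrable (fun x : En n => ‖x‖) μ)
    (h0 : (0 : En n) ∈ interior (convexHull ℝ (msupport μ))) :
    ∃ c₁ > (0 : ℝ), ∃ c₂ > (0 : ℝ), ∀ θ : En n, ‖θ‖ = 1 →
      c₂ ≤ ∫ x, Set.indicator {x : En n | c₁ < ⟪x, θ⟫} (fun x => ⟪x, θ⟫) x ∂μ := by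
  have hpos : ∀ θ ∈ Metric.sphere (0 : En n) 1, 0 < posInnerMoment μ θ := by
    intro θ hθ
    obtain ⟨x₀, hx₀, hx₀θ⟩ :=
      exists_mem_msupport_inner_pos h0 (ne_zero_of_mem_unit_sphere ⟨θ, hθ⟩)
    exact posInnerMoment_pos_of_mem_msupport hmom hx₀ hx₀θ
  obtain ⟨m, hm, hmin⟩ := (isCompact_sphere (0 : En n) 1).exists_forall_le'
    (lipschitzWith_posInnerMoment hmom).continuous.continuousOn hpos
  refine ⟨m / 2, by positivity, m / 2, by positivity, fun θ hθ => ?_⟩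
  calc m / 2 ≤ posInnerMoment μ θ - m / 2 := by
        linarith [hmin θ (mem_sphere_zero_iff_norm.mpr hθ)]
    _ ≤ _ := posInnerMoment_sub_le_integral_indicator hmom (by positivity) θ
end
end

section
/- Let μ be a Borel probability measure on ℝⁿ with 0 in the interior of conv(supp(μ)). There exists c > 0 (depending only on μ) such that: for any proper convex μ-integrable function ψ: ℝⁿ → ℝ ∪ {+∞} with ψ(0) = inf ψ and ∫ ψ dμ < 0, setting α = −ψ(0) > 0, one has ψ(x) ≤ −α/2 for all |x| < c. -/
open MeasureTheory Filter
open scoped ENNReal RealInnerProductSpace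

noncomputable section

/-! If `ψ x₀ > -α/2` at some `x₀` with `‖x₀‖ < c`, the closed convex sublevel set `{ψ ≤ -α/2}`,
which contains `0`, is separated from `x₀` by a unit vector `θ`, so `ψ > -α/2` on the half-space
`{⟪·, θ⟫ ≥ c}`. Convexity along rays from the minimum point `0` then gives
`ψ x ≥ -α + (α / 2c) (⟪x, θ⟫ - c₁)⁺`. Because `0` is interior to the convex hull of the support,
`∫ (⟪x, θ⟫ - c₁)⁺ dμ ≥ c₂ ≥ 4c` uniformly in `θ`, whence `∫ ψ dμ ≥ α > 0`, a contradiction. -/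

section InnerProductSpace

variable {E : Type*} [NormedAddCommGroup E] [InnerProductSpace ℝ E]

theorem exists_inner_gt_of_ball_subset_convexHull {s : Set E} {δ r : ℝ} (hr : 0 ≤ r)
    (hrδ : r < δ) (hs : Metric.ball 0 δ ⊆ convexHull ℝ s) {θ : E} (hθ : ‖θ‖ = 1) :
    ∃ y ∈ s, r < ⟪y, θ⟫ := by
  by_contra! h
  have hhull : convexHull ℝ s ⊆ {w | ⟪w, θ⟫ ≤ r} :=
    convexHull_min h (convex_halfSpace_le
      ⟨fun u v => inner_add_left u v θ, fun t u => real_inner_smul_left u θ t⟩ r)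
  have hball : ((r + δ) / 2) • θ ∈ Metric.ball (0 : E) δ := by
    rw [mem_ball_zero_iff, norm_smul, hθ, mul_one, Real.norm_of_nonneg (by linarith)]
    linarith
  have : ⟪((r + δ) / 2) • θ, θ⟫ ≤ r := hhull (hs hball)
  rw [real_inner_smul_left, real_inner_self_eq_norm_sq, hθ] at this
  linarith

theorem exists_norm_eq_one_inner_lt_of_notMem [CompleteSpace E] {K : Set E} (hconv : Convex ℝ K)
    (hclosed : IsClosed K) (hne : K.Nonempty) {x₀ : E} (hx₀ : x₀ ∉ K) :
    ∃ θ : E, ‖θ‖ = 1 ∧ ∀ z ∈ K, ⟪z, θ⟫ < ⟪x₀, θ⟫ := by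
  obtain ⟨f, u, hfK, hfx₀⟩ := geometric_hahn_banach_closed_point hconv hclosed hx₀
  set v := (InnerProductSpace.toDual ℝ E).symm f
  have hfv : ∀ z, f z = ⟪z, v⟫ := fun z => by
    rw [real_inner_comm, InnerProductSpace.toDual_symm_apply]
  have hv : v ≠ 0 := by
    rintro hv
    obtain ⟨z, hz⟩ := hne
    have := hfK z hz
    rw [hfv, hv, inner_zero_right] at this
    rw [hfv, hv, inner_zero_right] at hfx₀
    linarith
  refine ⟨‖v‖⁻¹ • v, norm_smul_inv_norm hv, fun z hz => ?_⟩
  rw [real_inner_smul_right, real_inner_smul_right, ← hfv, ← hfv]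
  exact mul_lt_mul_of_pos_left ((hfK z hz).trans hfx₀) (inv_pos.2 (norm_pos_iff.2 hv))

variable [MeasurableSpace E] {μ : Measure E} [IsFiniteMeasure μ]

theorem integrable_max_inner_sub (hμ : Integrable id μ) (θ : E) (r : ℝ) :
    Integrable (fun x => max (⟪x, θ⟫ - r) 0) μ :=
  ((hμ.inner_const θ).sub (integrable_const r)).pos_part

theorem lipschitzWith_integral_max_inner_sub (hμ : Integrable id μ) (r : ℝ) :
    LipschitzWith (∫ x, ‖x‖ ∂μ).toNNReal (fun θ => ∫ x, max (⟪x, θ⟫ - r) 0 ∂μ) := by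
  refine LipschitzWith.of_dist_le_mul fun θ θ' => ?_
  rw [dist_eq_norm, dist_eq_norm, Real.coe_toNNReal _ (integral_nonneg fun _ => norm_nonneg _),
    ← integral_sub (integrable_max_inner_sub hμ θ r) (integrable_max_inner_sub hμ θ' r),
    ← integral_mul_const]
  refine norm_integral_le_of_norm_le (hμ.norm.mul_const _) (Eventually.of_forall fun x => ?_)
  calc ‖max (⟪x, θ⟫ - r) 0 - max (⟪x, θ'⟫ - r) 0‖
      ≤ |(⟪x, θ⟫ - r) - (⟪x, θ'⟫ - r)| := abs_max_sub_max_le_abs _ _ _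
    _ = |⟪x, θ - θ'⟫| := by rw [inner_sub_right, sub_sub_sub_cancel_right]
    _ ≤ ‖x‖ * ‖θ - θ'‖ := abs_real_inner_le_norm _ _

end InnerProductSpace

theorem integral_pos_of_mem_msupport {n : ℕ} {μ : Measure (En n)} {f : En n → ℝ} {y : En n}
    (hy : y ∈ msupport μ) (hf : Continuous f) (hf0 : 0 ≤ f) (hfi : Integrable f μ)
    (hfy : f y ≠ 0) : 0 < ∫ x, f x ∂μ :=
  (integral_pos_iff_support_of_nonneg hf0 hfi).2 (hy _ hf.isOpen_support hfy)

theorem exists_pos_le_integral_max_inner_sub {n : ℕ} (μ : Measure (En n)) [IsFiniteMeasure μ]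
    (hμ : Integrable id μ) (h0 : (0 : En n) ∈ interior (convexHull ℝ (msupport μ))) :
    ∃ c₁ > (0 : ℝ), ∃ c₂ > (0 : ℝ), ∀ θ : En n, ‖θ‖ = 1 →
      c₂ ≤ ∫ x, max (⟪x, θ⟫ - c₁) 0 ∂μ := by
  obtain ⟨δ, hδ, hball⟩ := Metric.mem_nhds_iff.mp (mem_interior_iff_mem_nhds.mp h0)
  have hpos : ∀ θ ∈ Metric.sphere (0 : En n) 1, 0 < ∫ x, max (⟪x, θ⟫ - δ / 2) 0 ∂μ := by
    intro θ hθ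
    obtain ⟨y, hy, hyθ⟩ := exists_inner_gt_of_ball_subset_convexHull (r := δ / 2) (by positivity)
      (by linarith) hball (mem_sphere_zero_iff_norm.1 hθ)
    exact integral_pos_of_mem_msupport hy (by fun_prop) (fun x => le_max_right _ _)
      (integrable_max_inner_sub hμ θ _) (lt_max_of_lt_left (sub_pos.2 hyθ)).ne'
  obtain ⟨c₂, hc₂, hle⟩ := (isCompact_sphere (0 : En n) 1).exists_forall_le'
    (lipschitzWith_integral_max_inner_sub hμ _).continuous.continuousOn hpos
  exact ⟨δ / 2, by positivity, c₂, hc₂, fun θ hθ => hle θ (mem_sphere_zero_iff_norm.2 hθ)⟩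

namespace EConvexOn

variable {n : ℕ} {ψ : En n → EReal}

theorem le_coe_of_le_coe (hψ : EConvexOn ψ) {x y : En n} {r s a b : ℝ} (hx : ψ x ≤ r)
    (hy : ψ y ≤ s) (ha : 0 ≤ a) (hb : 0 ≤ b) (hab : a + b = 1) :
    ψ (a • x + b • y) ≤ ((a * r + b * s : ℝ) : EReal) := by
  refine (hψ x y a b ha hb hab).trans ?_
  push_cast
  exact add_le_add (mul_le_mul_of_nonneg_left hx (EReal.coe_nonneg.2 ha))
    (mul_le_mul_of_nonneg_left hy (EReal.coe_nonneg.2 hb))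

theorem convex_setOf_le_coe (hψ : EConvexOn ψ) (r : ℝ) : Convex ℝ {x | ψ x ≤ r} := by
  intro x hx y hy a b ha hb hab
  have := hψ.le_coe_of_le_coe hx hy ha hb hab
  rwa [← add_mul, hab, one_mul] at this

theorem exists_norm_eq_one_lt_of_le_inner (hψ : EConvexOn ψ) (hlsc : LowerSemicontinuous ψ)
    {m : ℝ} (h0 : ψ 0 ≤ m) {x₀ : En n} (hx₀ : (m : EReal) < ψ x₀) :
    ∃ θ : En n, ‖θ‖ = 1 ∧ ∀ z, ‖x₀‖ ≤ ⟪z, θ⟫ → (m : EReal) < ψ z := by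
  obtain ⟨θ, hθ, hsep⟩ := exists_norm_eq_one_inner_lt_of_notMem (hψ.convex_setOf_le_coe m)
    (hlsc.isClosed_preimage _) ⟨0, h0⟩ hx₀.not_ge
  refine ⟨θ, hθ, fun z hz => lt_of_not_ge fun hzm => (hsep z hzm).not_ge ?_⟩
  calc ⟪x₀, θ⟫ ≤ ‖x₀‖ := by simpa [hθ] using real_inner_le_norm x₀ θ
    _ ≤ ⟪z, θ⟫ := hz

theorem add_div_mul_inner_lt_toReal (hψ : EConvexOn ψ) {a m c : ℝ} {θ x : En n} (hc : 0 < c)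
    (h0 : ψ 0 ≤ a) (hm : ∀ z, c ≤ ⟪z, θ⟫ → (m : EReal) < ψ z) (hx : ψ x ≠ ⊤)
    (hxθ : c ≤ ⟪x, θ⟫) : a + (m - a) / c * ⟪x, θ⟫ < (ψ x).toReal := by
  have hs : 0 < ⟪x, θ⟫ := hc.trans_le hxθ
  set t := c / ⟪x, θ⟫
  have hts : t * ⟪x, θ⟫ = c := div_mul_cancel₀ _ hs.ne'
  have hmt : (m : EReal) < ψ (t • x + (1 - t) • 0) :=
    hm _ (by rw [smul_zero, add_zero, real_inner_smul_left, hts])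
  have key : m < t * (ψ x).toReal + (1 - t) * a := by
    exact_mod_cast hmt.trans_le (hψ.le_coe_of_le_coe (EReal.le_coe_toReal hx) h0
      (by positivity) (sub_nonneg.2 ((div_le_one hs).2 hxθ)) (by ring))
  have : (m - a) * ⟪x, θ⟫ < c * ((ψ x).toReal - a) := by
    rw [← hts]; nlinarith
  have : (m - a) / c * ⟪x, θ⟫ < (ψ x).toReal - a := by
    rw [div_mul_eq_mul_div, div_lt_iff₀ hc]
    linarith
  linarith

theorem add_div_mul_max_inner_sub_le_toReal (hψ : EConvexOn ψ) {a m c r : ℝ} {θ x : En n}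
    (hc : 0 < c) (hcr : c ≤ r) (ham : a ≤ m) (h0 : ψ 0 ≤ a)
    (hm : ∀ z, c ≤ ⟪z, θ⟫ → (m : EReal) < ψ z) (hxa : (a : EReal) ≤ ψ x) (hx : ψ x ≠ ⊤) :
    a + (m - a) / c * max (⟪x, θ⟫ - r) 0 ≤ (ψ x).toReal := by
  rcases le_or_gt ⟪x, θ⟫ r with hxr | hxr
  · rw [max_eq_right (sub_nonpos.2 hxr), mul_zero, add_zero]
    simpa using EReal.toReal_le_toReal hxa (EReal.coe_ne_bot a) hx
  · rw [max_eq_left (sub_nonneg.2 hxr.le)]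
    have hslope : 0 ≤ (m - a) / c := div_nonneg (sub_nonneg.2 ham) hc.le
    have := hψ.add_div_mul_inner_lt_toReal hc h0 hm hx (hcr.trans hxr.le)
    nlinarith [mul_le_mul_of_nonneg_left (sub_le_self ⟪x, θ⟫ (hc.le.trans hcr)) hslope]

end EConvexOn

theorem statement6 {n : ℕ} (μ : Measure (En n)) [IsProbabilityMeasure μ]
    (hmom : Integrable (fun x : En n => ‖x‖) μ)
    (h0 : (0 : En n) ∈ interior (convexHull ℝ (msupport μ))) :
    ∃ c > (0 : ℝ), ∀ ψ : En n → EReal,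
      EConvexOn ψ → LowerSemicontinuous ψ → (∀ x, ψ x ≠ ⊥) → (∃ x, ψ x ≠ ⊤) →
      Integrable (fun x => (ψ x).toReal) μ → (∀ᵐ x ∂μ, ψ x ≠ ⊤) →
      (∀ x, ψ 0 ≤ ψ x) → (∫ x, (ψ x).toReal ∂μ) < 0 →
      ∀ x : En n, ‖x‖ < c → ψ x ≤ (((ψ 0).toReal / 2 : ℝ) : EReal) := by
  have hμ : Integrable id μ := (integrable_norm_iff aestronglyMeasurable_id).1 hmom
  obtain ⟨c₁, hc₁, c₂, hc₂, hF⟩ := exists_pos_le_integral_max_inner_sub μ hμ h0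
  refine ⟨min c₁ (c₂ / 4), by positivity,
    fun ψ hψ hlsc hbot ⟨x₁, hx₁⟩ hint hae hmin hneg x₀ hx₀ => ?_⟩
  set c := min c₁ (c₂ / 4)
  have hc : 0 < c := by positivity
  obtain ⟨a, hψ0⟩ : ∃ a : ℝ, ψ 0 = a :=
    ⟨_, (EReal.coe_toReal (ne_top_of_le_ne_top hx₁ (hmin x₁)) (hbot 0)).symm⟩
  rw [hψ0, EReal.toReal_coe]
  have ha : a < 0 := by
    refine lt_of_le_of_lt ?_ hneg
    simpa using integral_mono_ae (integrable_const a) hint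
      (hae.mono fun x hx => EReal.toReal_le_toReal (hψ0 ▸ hmin x : (a : EReal) ≤ ψ x)
        (EReal.coe_ne_bot a) hx)
  by_contra! hx₀K
  obtain ⟨θ, hθ, hout⟩ := hψ.exists_norm_eq_one_lt_of_le_inner hlsc
    (hψ0.trans_le (by exact_mod_cast by linarith)) hx₀K
  have hhinge := (integrable_max_inner_sub hμ θ c₁).const_mul ((a / 2 - a) / c)
  have hlow : ∫ x, (a + (a / 2 - a) / c * max (⟪x, θ⟫ - c₁) 0) ∂μ ≤ ∫ x, (ψ x).toReal ∂μ :=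
    integral_mono_ae ((integrable_const a).add hhinge) hint <| hae.mono fun x hx =>
      hψ.add_div_mul_max_inner_sub_le_toReal hc (min_le_left _ _) (by linarith) hψ0.le
        (fun z hz => hout z (hx₀.le.trans hz)) (hψ0 ▸ hmin x) hx
  rw [integral_add (integrable_const a) hhinge, integral_const, probReal_univ, one_smul,
    integral_const_mul] at hlow
  have h4c : 4 * c ≤ ∫ x, max (⟪x, θ⟫ - c₁) 0 ∂μ := by
    linarith [min_le_right c₁ (c₂ / 4), hF θ hθ]
  have hslope : (a / 2 - a) / c * (4 * c) = -2 * a := by field_simp; ring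
  linarith [mul_le_mul_of_nonneg_left h4c (div_nonneg (by linarith : 0 ≤ a / 2 - a) hc.le)]
end
end

section
/- Let p > 0 and let μ be a probability measure on ℝⁿ with barycenter at the origin, finite first moment, and 0 in the interior of conv(supp(μ)). Then the infimum of the functional I_{μ,p}(ψ) = ∫ ψ dμ + (∫_{ℝⁿ} (ψ*(x))^{-(n+p)} dx)^{-2/p}, taken over all μ-integrable proper convex functions ψ: ℝⁿ → ℝ ∪ {+∞} with ψ(0) < 0, is finite (greater than −∞). -/
open MeasureTheory Filter
open scoped ENNReal RealInnerProductSpace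

noncomputable section

/-- The functional `I_{μ,p}(ψ) = ∫ ψ dμ + (∫ (ψ*)^{-(n+p)})^{-2/p}`, with values in
`ℝ ∪ {±∞}`. -/
def Imup (n : ℕ) (p : ℝ) (μ : Measure (En n)) (ψ : En n → EReal) : EReal :=
  ((∫ x, (ψ x).toReal ∂μ : ℝ) : EReal) +
    (((∫⁻ x, negPow (legendre ψ x) ((n : ℝ) + p)) ^ (-(2 : ℝ) / p) : ℝ≥0∞) : EReal)

/-!
Fenchel's inequality `ψ x ≥ ⟪x, y⟫ - ψ* y`, integrated against `μ` (barycenter `0`), gives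
`∫ ψ dμ ≥ -m` with `m = inf ψ*`; only the case `∫ ψ dμ < -1`, where `m > 1`, needs work.
Pick `y₀` with `ψ* y₀ ≤ m + 1`. The Fenchel gap `ψ - ⟪·, y₀⟫ + ψ* y₀ ≥ 0` has integral at most
`m`, so by Markov's inequality it is at most `2m/δ` somewhere in every half-space
`{⟪·, θ⟫ ≥ r}`; such `r, δ > 0`, with every such half-space of mass `≥ δ`, exist because `0` is
interior to the convex hull of the support. Hence `ψ*` grows linearly away from `y₀`,
`ψ* z ≳ max m ‖z - y₀‖`, which gives `∫ (ψ*)^{-(n+p)} ≲ m^{-3p/4}`: the second term of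
`I_{μ,p}(ψ)` is `≳ m^{3/2}` and beats `-m`.
-/

open Metric

theorem exists_mem_le_inner_of_ball_subset_convexHull {E : Type*} [NormedAddCommGroup E]
    [InnerProductSpace ℝ E] {s : Set E} {ε t : ℝ} (hball : ball 0 ε ⊆ convexHull ℝ s)
    (ht : 0 ≤ t) (htε : t < ε) {θ : E} (hθ : ‖θ‖ = 1) : ∃ x ∈ s, t ≤ ⟪x, θ⟫ := by
  by_contra! hs
  have hsub : convexHull ℝ s ⊆ {z | ⟪z, θ⟫ < t} :=
    convexHull_min hs (convex_halfSpace_lt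
      ⟨fun a b => inner_add_left a b θ, fun c x => real_inner_smul_left x θ c⟩ t)
  have hmem : t • θ ∈ convexHull ℝ s :=
    hball (by rwa [mem_ball_zero_iff, norm_smul, hθ, mul_one, Real.norm_of_nonneg ht])
  have := hsub hmem
  simp [real_inner_smul_left, hθ] at this

theorem ball_subset_le_inner {E : Type*} [NormedAddCommGroup E] [InnerProductSpace ℝ E]
    {x θ : E} {ρ t : ℝ} (hθ : ‖θ‖ = 1) (hx : t + ρ ≤ ⟪x, θ⟫) :
    ball x ρ ⊆ {z | t ≤ ⟪z, θ⟫} := by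
  intro z hz
  have hzx : |⟪z - x, θ⟫| < ρ := by
    calc |⟪z - x, θ⟫| ≤ ‖z - x‖ * ‖θ‖ := abs_real_inner_le_norm _ _
      _ < ρ := by rwa [hθ, mul_one, ← dist_eq_norm]
  have : ⟪z, θ⟫ = ⟪x, θ⟫ + ⟪z - x, θ⟫ := by rw [inner_sub_left]; ring
  simp only [Set.mem_ofPred_eq, this]
  linarith [(abs_lt.mp hzx).1]

theorem exists_pos_le_measure_halfSpace {n : ℕ} (μ : Measure (En n))
    (h0 : (0 : En n) ∈ interior (convexHull ℝ (msupport μ))) :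
    ∃ r δ : ℝ, 0 < r ∧ 0 < δ ∧ ∀ θ : En n, ‖θ‖ = 1 →
      ENNReal.ofReal δ ≤ μ {z | r ≤ ⟪z, θ⟫} := by
  obtain ⟨ε, hε, hball⟩ := Metric.mem_nhds_iff.mp (mem_interior_iff_mem_nhds.mp h0)
  set r := ε / 8 with hr
  have hr0 : 0 < r := by positivity
  -- a support point far out in one direction is far out in all nearby ones: compactness of the
  -- sphere leaves finitely many balls around support points, each of positive mass
  obtain ⟨t, htsupp, htfin, htcover⟩ := (isCompact_sphere (0 : En n) 1).elim_finite_subcover_image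
    (b := msupport μ) (c := fun x => {θ | 2 * r < ⟪x, θ⟫})
    (fun x _ => isOpen_lt continuous_const (continuous_const.inner continuous_id))
    (fun θ hθ => by
      obtain ⟨x, hx, hxθ⟩ := exists_mem_le_inner_of_ball_subset_convexHull hball
        (t := 4 * r) (by positivity) (by linarith) (mem_sphere_zero_iff_norm.mp hθ)
      exact Set.mem_biUnion hx (by simp only [Set.mem_ofPred_eq]; linarith))
  set ν := htfin.toFinset.inf fun x => μ (ball x r)
  have hν : 0 < ν := (Finset.lt_inf_iff ENNReal.zero_lt_top).mpr fun x hx =>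
    htsupp (htfin.mem_toFinset.mp hx) _ isOpen_ball (mem_ball_self hr0)
  refine ⟨r, (min ν 1).toReal, hr0, ENNReal.toReal_pos (by positivity) (by simp), ?_⟩
  intro θ hθ
  obtain ⟨x, hxt, hxθ⟩ := Set.mem_iUnion₂.mp (htcover (mem_sphere_zero_iff_norm.mpr hθ))
  calc ENNReal.ofReal (min ν 1).toReal = min ν 1 := ENNReal.ofReal_toReal (by simp)
    _ ≤ μ (ball x r) := (min_le_left _ _).trans (Finset.inf_le (htfin.mem_toFinset.mpr hxt))
    _ ≤ μ {z | r ≤ ⟪z, θ⟫} := measure_mono (ball_subset_le_inner hθ (by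
        simp only [Set.mem_ofPred_eq] at hxθ; linarith))

theorem le_legendre {n : ℕ} {ψ : En n → EReal} {x : En n} (hx : ψ x < ⊤) (y : En n) :
    ((⟪x, y⟫ : ℝ) : EReal) - ψ x ≤ legendre ψ y :=
  le_iSup (fun z : {z : En n // ψ z < ⊤} => ((⟪z.1, y⟫ : ℝ) : EReal) - ψ z.1) ⟨x, hx⟩

theorem inner_sub_le_toReal_of_legendre_le {n : ℕ} {ψ : En n → EReal} {x y : En n} {s : ℝ}
    (hbot : ψ x ≠ ⊥) (htop : ψ x ≠ ⊤) (hs : legendre ψ y ≤ s) : ⟪x, y⟫ - s ≤ (ψ x).toReal := by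
  have := (le_legendre htop.lt_top y).trans hs
  rw [← EReal.coe_toReal htop hbot, ← EReal.coe_sub, EReal.coe_le_coe_iff] at this
  linarith

theorem integral_inner_eq_zero {E : Type*} [NormedAddCommGroup E] [InnerProductSpace ℝ E]
    [CompleteSpace E] [MeasurableSpace E] {μ : Measure E} (hid : Integrable (fun x => x) μ)
    (hbary : ∫ x, x ∂μ = 0) (y : E) : ∫ x, ⟪x, y⟫ ∂μ = 0 := by
  simp_rw [real_inner_comm y]
  rw [integral_inner hid y, hbary, inner_zero_right]

theorem integrable_inner_left_s7 {E : Type*} [NormedAddCommGroup E] [InnerProductSpace ℝ E]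
    [MeasurableSpace E] {μ : Measure E} (hid : Integrable (fun x => x) μ) (y : E) :
    Integrable (fun x => ⟪x, y⟫) μ :=
  ((innerSL ℝ y).integrable_comp hid).congr (ae_of_all _ fun x => real_inner_comm x y)

theorem neg_integral_le_legendre {n : ℕ} {μ : Measure (En n)} [IsProbabilityMeasure μ]
    {ψ : En n → EReal} (hid : Integrable (fun x => x) μ) (hbary : ∫ x, x ∂μ = 0)
    (hbot : ∀ x, ψ x ≠ ⊥) (hint : Integrable (fun x => (ψ x).toReal) μ)
    (hae : ∀ᵐ x ∂μ, ψ x ≠ ⊤) (y : En n) :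
    ((-∫ x, (ψ x).toReal ∂μ : ℝ) : EReal) ≤ legendre ψ y := by
  refine EReal.le_of_forall_lt_iff_le.mp fun s hs => EReal.coe_le_coe_iff.mpr ?_
  have hmono : ∀ᵐ x ∂μ, ⟪x, y⟫ - s ≤ (ψ x).toReal := hae.mono fun x hx =>
    inner_sub_le_toReal_of_legendre_le (hbot x) hx hs.le
  have := integral_mono_ae (f := fun x => ⟪x, y⟫ - s)
    ((integrable_inner_left_s7 hid y).sub (integrable_const s)) hint hmono
  rw [integral_sub (integrable_inner_left_s7 hid y) (integrable_const s),
    integral_inner_eq_zero hid hbary, integral_const, probReal_univ, one_smul] at this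
  linarith

theorem exists_mem_le_of_integral_le {α : Type*} [MeasurableSpace α] {μ : Measure α}
    {f : α → ℝ} (hf : Integrable f μ) (hf0 : 0 ≤ᵐ[μ] f) {P : α → Prop} (hP : ∀ᵐ x ∂μ, P x)
    {M δ : ℝ} (hM : 0 < M) (hδ : 0 < δ) (hfM : ∫ x, f x ∂μ ≤ M) {A : Set α}
    (hA : ENNReal.ofReal δ ≤ μ A) : ∃ x ∈ A, f x ≤ 2 * M / δ ∧ P x := by
  by_contra! hbad
  set T := 2 * M / δ
  have hT : 0 < T := by positivity
  have hsub : A ⊆ {x | T ≤ f x} ∪ {x | ¬P x} := fun x hx => by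
    by_cases hPx : P x
    · exact Or.inl (le_of_lt (not_le.mp fun h => hbad x hx h hPx))
    · exact Or.inr hPx
  have hnull : μ {x | ¬P x} = 0 := ae_iff.mp hP
  have hmarkov : μ.real {x | T ≤ f x} ≤ δ / 2 := by
    have := (mul_meas_ge_le_integral_of_nonneg hf0 hf T).trans hfM
    rw [le_div_iff₀ two_pos]
    calc μ.real {x | T ≤ f x} * 2 = T * μ.real {x | T ≤ f x} * (δ / M) := by
          simp only [T]; field_simp
      _ ≤ M * (δ / M) := by gcongr
      _ = δ := by field_simp
  have hfin : μ {x | T ≤ f x} ≠ ⊤ := ne_top_of_le_ne_top (hf.measure_norm_ge_lt_top hT).ne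
    (measure_mono fun x (hx : T ≤ f x) => hx.trans (le_abs_self (f x)))
  have : ENNReal.ofReal δ ≤ ENNReal.ofReal (δ / 2) := calc
    ENNReal.ofReal δ ≤ μ A := hA
    _ ≤ μ {x | T ≤ f x} + μ {x | ¬P x} := (measure_mono hsub).trans (measure_union_le _ _)
    _ = ENNReal.ofReal (μ.real {x | T ≤ f x}) := by rw [hnull, add_zero, ofReal_measureReal hfin]
    _ ≤ ENNReal.ofReal (δ / 2) := ENNReal.ofReal_le_ofReal hmarkov
  rw [ENNReal.ofReal_le_ofReal_iff (by positivity)] at this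
  linarith

theorem legendre_ge_of_forall_unit {n : ℕ} {ψ : En n → EReal} {y₀ : En n} {r b : ℝ}
    (hψ : ∀ θ : En n, ‖θ‖ = 1 → ∃ x, r ≤ ⟪x, θ⟫ ∧ ψ x ≤ ((⟪x, y₀⟫ - b : ℝ) : EReal))
    {z : En n} (hz : z ≠ y₀) : ((r * ‖z - y₀‖ + b : ℝ) : EReal) ≤ legendre ψ z := by
  set u := ‖z - y₀‖
  have hu : 0 < u := norm_pos_iff.mpr (sub_ne_zero.mpr hz)
  obtain ⟨x, hxθ, hxψ⟩ := hψ (u⁻¹ • (z - y₀)) (by simp [u, norm_smul, hu.ne'])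
  have hinner : r * u ≤ ⟪x, z - y₀⟫ := by
    rw [real_inner_smul_right] at hxθ
    rwa [le_inv_mul_iff₀ hu, mul_comm] at hxθ
  refine le_trans ?_ (le_legendre (hxψ.trans_lt (EReal.coe_lt_top _)) z)
  refine le_trans ?_ (EReal.sub_le_sub le_rfl hxψ)
  rw [← EReal.coe_sub, EReal.coe_le_coe_iff, inner_sub_right] at *
  linarith

theorem mul_one_add_le_max {r κ m u : ℝ} (hr : 0 < r) (hκ : 1 ≤ κ) (hm : 1 ≤ m) :
    r / (r + κ) * (1 + u) ≤ max m (r * u - (κ - 1) * m) := by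
  rw [div_mul_eq_mul_div, div_le_iff₀ (by linarith)]
  rcases le_or_gt (r * u) (κ * m) with h | h
  · exact le_trans (by nlinarith) (mul_le_mul_of_nonneg_right (le_max_left _ _) (by linarith))
  · refine le_trans ?_ (mul_le_mul_of_nonneg_right (le_max_right _ _) (by linarith))
    nlinarith [mul_le_mul_of_nonneg_left h.le (by linarith : (0 : ℝ) ≤ κ - 1),
      mul_le_mul_of_nonneg_left hm (by linarith : (0 : ℝ) ≤ κ)]

theorem exists_forall_le_coe_add_one {α : Type*} {f : α → EReal} {b : ℝ}
    (hb : ∀ y, (b : EReal) ≤ f y) (hf : ∃ y, f y ≠ ⊤) :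
    ∃ m : ℝ, b ≤ m ∧ (∀ y, (m : EReal) ≤ f y) ∧ ∃ y₀, f y₀ ≤ ((m + 1 : ℝ) : EReal) := by
  obtain ⟨y₁, hy₁⟩ := hf
  have hbinf : (b : EReal) ≤ ⨅ y, f y := le_iInf hb
  set m := (⨅ y, f y).toReal
  have hm : (m : EReal) = ⨅ y, f y :=
    EReal.coe_toReal (ne_top_of_le_ne_top hy₁ (iInf_le f y₁)) (ne_bot_of_le_ne_bot (by simp) hbinf)
  obtain ⟨y₀, hy₀⟩ := iInf_lt_iff.mp (hm ▸ EReal.coe_lt_coe_iff.mpr (lt_add_one m))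
  exact ⟨m, EReal.coe_le_coe_iff.mp (hm ▸ hbinf), fun y => hm ▸ iInf_le f y, y₀, hy₀.le⟩

theorem legendre_ge_mul_one_add_norm_sub {n : ℕ} {μ : Measure (En n)} [IsProbabilityMeasure μ]
    (hid : Integrable (fun x => x) μ) (hbary : ∫ x, x ∂μ = 0) {r δ : ℝ} (hr : 0 < r)
    (hδ : 0 < δ) (hmass : ∀ θ : En n, ‖θ‖ = 1 → ENNReal.ofReal δ ≤ μ {z | r ≤ ⟪z, θ⟫})
    {ψ : En n → EReal} (hbot : ∀ x, ψ x ≠ ⊥) (hint : Integrable (fun x => (ψ x).toReal) μ)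
    (hae : ∀ᵐ x ∂μ, ψ x ≠ ⊤) {m s : ℝ} {y₀ : En n} (hm : 1 ≤ m)
    (hmψ : ∀ y, (m : EReal) ≤ legendre ψ y) (hs : legendre ψ y₀ ≤ s)
    (hsm : ∫ x, (ψ x).toReal ∂μ + s ≤ m) (z : En n) :
    ((r / (r + (1 + 2 / δ)) * (1 + ‖z - y₀‖) : ℝ) : EReal) ≤ legendre ψ z := by
  set h := fun x => (ψ x).toReal - ⟪x, y₀⟫ + s
  have hsub : Integrable (fun x => (ψ x).toReal - ⟪x, y₀⟫) μ :=
    hint.sub (integrable_inner_left_s7 hid y₀)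
  have hh : Integrable h μ := hsub.add (integrable_const s)
  have hh0 : 0 ≤ᵐ[μ] h := hae.mono fun x hx => by
    have := inner_sub_le_toReal_of_legendre_le (hbot x) hx hs
    simp only [h, Pi.zero_apply]
    linarith
  have hhm : ∫ x, h x ∂μ ≤ m := by
    simp only [h]
    rw [integral_add hsub (integrable_const s), integral_sub hint (integrable_inner_left_s7 hid y₀),
      integral_inner_eq_zero hid hbary, integral_const, probReal_univ, one_smul]
    linarith
  have hgood : ∀ θ : En n, ‖θ‖ = 1 →
      ∃ x, r ≤ ⟪x, θ⟫ ∧ ψ x ≤ ((⟪x, y₀⟫ - (s - 2 * m / δ) : ℝ) : EReal) := fun θ hθ => by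
    obtain ⟨x, hxθ, hxh, hxtop⟩ :=
      exists_mem_le_of_integral_le hh hh0 hae (by linarith) hδ hhm (hmass θ hθ)
    refine ⟨x, hxθ, ?_⟩
    rw [← EReal.coe_toReal hxtop (hbot x), EReal.coe_le_coe_iff]
    simp only [h] at hxh
    linarith
  have hms : m ≤ s := EReal.coe_le_coe_iff.mp ((hmψ y₀).trans hs)
  have hκ : (1 : ℝ) ≤ 1 + 2 / δ := le_add_of_nonneg_right (by positivity)
  refine le_trans (EReal.coe_le_coe_iff.mpr (mul_one_add_le_max hr hκ hm)) ?_
  rw [EReal.coe_strictMono.monotone.map_max]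
  refine max_le (hmψ z) ?_
  rcases eq_or_ne z y₀ with rfl | hz
  · refine (hmψ z).trans' (EReal.coe_le_coe_iff.mpr ?_)
    simp only [sub_self, norm_zero, mul_zero, zero_sub, neg_le]
    nlinarith [div_pos two_pos hδ]
  · refine (legendre_ge_of_forall_unit hgood hz).trans' (EReal.coe_le_coe_iff.mpr ?_)
    have : (1 + 2 / δ - 1) * m = 2 * m / δ := by ring
    linarith

theorem negPow_le_ofReal_mul {t : EReal} {m g α β : ℝ} (hm : 0 < m) (hg : 0 < g) (hα : 0 ≤ α)
    (hβ : 0 ≤ β) (htm : (m : EReal) ≤ t) (htg : (g : EReal) ≤ t) :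
    negPow t (α + β) ≤ ENNReal.ofReal (m ^ (-α) * g ^ (-β)) := by
  rcases eq_or_ne t ⊤ with rfl | htop
  · simp [negPow]
  have htbot : t ≠ ⊥ := ne_bot_of_le_ne_bot (EReal.coe_ne_bot m) htm
  rw [← EReal.coe_toReal htop htbot, EReal.coe_le_coe_iff] at htm htg
  have ht : 0 < t.toReal := hm.trans_le htm
  rw [negPow, if_neg htop, if_neg (not_le.mpr ?_)]
  · rw [neg_add, Real.rpow_add ht]
    exact ENNReal.ofReal_le_ofReal <|
      mul_le_mul (Real.rpow_le_rpow_of_nonpos hm htm (neg_nonpos.mpr hα))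
        (Real.rpow_le_rpow_of_nonpos hg htg (neg_nonpos.mpr hβ)) (by positivity) (by positivity)
  · rw [← EReal.coe_toReal htop htbot]
    exact_mod_cast ht

theorem exists_lintegral_one_add_norm_sub_rpow_le {E : Type*} [NormedAddCommGroup E]
    [NormedSpace ℝ E] [FiniteDimensional ℝ E] [MeasurableSpace E] [BorelSpace E]
    (μ : Measure E) [μ.IsAddHaarMeasure] {q : ℝ} (hq : (Module.finrank ℝ E : ℝ) < q) :
    ∃ k : ℝ, 0 < k ∧
      ∀ y₀ : E, ∫⁻ z, ENNReal.ofReal ((1 + ‖z - y₀‖) ^ (-q)) ∂μ ≤ ENNReal.ofReal k := by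
  set K := ∫⁻ z, ENNReal.ofReal ((1 + ‖z‖) ^ (-q)) ∂μ
  refine ⟨K.toReal + 1, by positivity, fun y₀ => ?_⟩
  rw [lintegral_sub_right_eq_self (fun z => ENNReal.ofReal ((1 + ‖z‖) ^ (-q))) y₀,
    ← ENNReal.ofReal_toReal (finite_integral_one_add_norm hq).ne]
  exact ENNReal.ofReal_le_ofReal (le_add_of_nonneg_right zero_le_one)

theorem exists_forall_le_rpow_lintegral_negPow (n : ℕ) {p a : ℝ} (hp : 0 < p) (ha : 0 < a) :
    ∃ c : ℝ, 0 < c ∧ ∀ (f : En n → EReal) (y₀ : En n) (m : ℝ), 0 < m → (∀ z, (m : EReal) ≤ f z) →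
      (∀ z, ((a * (1 + ‖z - y₀‖) : ℝ) : EReal) ≤ f z) →
      ENNReal.ofReal (c * m ^ (3 / 2 : ℝ)) ≤ (∫⁻ z, negPow (f z) ((n : ℝ) + p)) ^ (-2 / p) := by
  -- split `n + p = 3p/4 + q`: the factor `m ^ (-3p/4)` becomes `m ^ (3/2)` after `(·) ^ (-2/p)`,
  -- and `(1 + ‖z‖) ^ (-q)` is integrable since `q > n`
  set q := (n : ℝ) + p / 4
  obtain ⟨k, hk, hK⟩ := exists_lintegral_one_add_norm_sub_rpow_le (volume : Measure (En n))
    (q := q) (by rw [finrank_euclideanSpace_fin]; simp only [q]; linarith)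
  set k' := a ^ (-q) * k
  refine ⟨k' ^ (-2 / p), by positivity, fun f y₀ m hm hmf haf => ?_⟩
  have hpt : ∀ z, negPow (f z) ((n : ℝ) + p) ≤
      ENNReal.ofReal (m ^ (-(3 * p / 4)) * a ^ (-q)) * ENNReal.ofReal ((1 + ‖z - y₀‖) ^ (-q)) := by
    intro z
    rw [← ENNReal.ofReal_mul (by positivity), mul_assoc, ← Real.mul_rpow ha.le (by positivity),
      show (n : ℝ) + p = 3 * p / 4 + q by ring]
    exact negPow_le_ofReal_mul hm (by positivity) (by positivity) (by positivity) (hmf z) (haf z)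
  have hL : ∫⁻ z, negPow (f z) ((n : ℝ) + p) ≤ ENNReal.ofReal (m ^ (-(3 * p / 4)) * k') := by
    calc ∫⁻ z, negPow (f z) ((n : ℝ) + p)
        ≤ ENNReal.ofReal (m ^ (-(3 * p / 4)) * a ^ (-q)) *
            ∫⁻ z, ENNReal.ofReal ((1 + ‖z - y₀‖) ^ (-q)) := by
          rw [← lintegral_const_mul' _ _ ENNReal.ofReal_ne_top]
          exact lintegral_mono hpt
      _ ≤ ENNReal.ofReal (m ^ (-(3 * p / 4)) * a ^ (-q)) * ENNReal.ofReal k := by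
          gcongr; exact hK y₀
      _ = ENNReal.ofReal (m ^ (-(3 * p / 4)) * k') := by
          rw [← ENNReal.ofReal_mul (by positivity), mul_assoc]
  have hpow : (m ^ (-(3 * p / 4)) * k') ^ (-2 / p) = k' ^ (-2 / p) * m ^ (3 / 2 : ℝ) := by
    rw [Real.mul_rpow (by positivity) (by positivity), ← Real.rpow_mul hm.le, mul_comm]
    congr 2
    field_simp
    ring
  rw [← hpow, ← ENNReal.ofReal_rpow_of_pos (by positivity), neg_div, ENNReal.rpow_neg,
    ENNReal.rpow_neg]
  exact ENNReal.inv_le_inv.mpr (ENNReal.rpow_le_rpow hL (by positivity))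

theorem neg_sq_le_mul_rpow_sub {c m : ℝ} (hc : 0 < c) (hm : 0 ≤ m) :
    -(2 / c) ^ 2 ≤ c * m ^ (3 / 2 : ℝ) - m := by
  have hsq : m ^ (3 / 2 : ℝ) = m * √m := by
    rw [Real.sqrt_eq_rpow, ← Real.rpow_one_add' hm (by norm_num)]
    norm_num
  rw [hsq]
  rcases le_or_gt m ((2 / c) ^ 2) with h | h
  · nlinarith [Real.sqrt_nonneg m, mul_nonneg hc.le (mul_nonneg hm (Real.sqrt_nonneg m))]
  · have h2 : 2 / c < √m := Real.lt_sqrt_of_sq_lt h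
    have : 2 ≤ c * √m := by rw [div_lt_iff₀' hc] at h2; linarith
    nlinarith

theorem coe_add_le_Imup {n : ℕ} {p t : ℝ} {μ : Measure (En n)} {ψ : En n → EReal}
    (ht : ENNReal.ofReal t ≤ (∫⁻ x, negPow (legendre ψ x) ((n : ℝ) + p)) ^ (-(2 : ℝ) / p)) :
    ((∫ x, (ψ x).toReal ∂μ + t : ℝ) : EReal) ≤ Imup n p μ ψ := by
  rw [Imup, EReal.coe_add]
  gcongr
  calc (t : EReal) ≤ ((ENNReal.ofReal t : ℝ≥0∞) : EReal) := by
        rw [EReal.coe_ennreal_ofReal]; exact le_max_left (t : EReal) 0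
    _ ≤ _ := EReal.coe_ennreal_le_coe_ennreal_iff.mpr ht

theorem Imup_eq_top_of_forall_legendre_eq_top {n : ℕ} {p : ℝ} (hp : 0 < p) (μ : Measure (En n))
    {ψ : En n → EReal} (h : ∀ y, legendre ψ y = ⊤) : Imup n p μ ψ = ⊤ := by
  simp only [Imup, h, negPow, if_true, lintegral_zero]
  rw [ENNReal.zero_rpow_of_neg (by simp [neg_div, hp])]
  exact EReal.coe_add_top _

theorem statement7 {n : ℕ} (p : ℝ) (hp : 0 < p) (μ : Measure (En n))
    [IsProbabilityMeasure μ] (hmom : Integrable (fun x : En n => ‖x‖) μ)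
    (hbary : (∫ x, x ∂μ) = (0 : En n))
    (h0 : (0 : En n) ∈ interior (convexHull ℝ (msupport μ))) :
    ∃ C : ℝ, ∀ ψ : En n → EReal,
      EConvexOn ψ → LowerSemicontinuous ψ → (∀ x, ψ x ≠ ⊥) → (∃ x, ψ x ≠ ⊤) →
      ψ 0 < 0 → Integrable (fun x => (ψ x).toReal) μ → (∀ᵐ x ∂μ, ψ x ≠ ⊤) →
      ((C : ℝ) : EReal) ≤ Imup n p μ ψ := by
  have hid : Integrable (fun x => x) μ := (integrable_norm_iff aestronglyMeasurable_id).mp hmom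
  obtain ⟨r, δ, hr, hδ, hmass⟩ := exists_pos_le_measure_halfSpace μ h0
  obtain ⟨c, hc, hlintegral⟩ :=
    exists_forall_le_rpow_lintegral_negPow n hp (a := r / (r + (1 + 2 / δ))) (by positivity)
  refine ⟨-1 - (2 / c) ^ 2, fun ψ _ _ hbot _ _ hint hae => ?_⟩
  set I := ∫ x, (ψ x).toReal ∂μ
  have hIψ : ∀ y, ((-I : ℝ) : EReal) ≤ legendre ψ y :=
    neg_integral_le_legendre hid hbary hbot hint hae
  rcases le_or_gt (-1) I with hI | hI
  · refine (coe_add_le_Imup (t := 0) (by simp)).trans' (EReal.coe_le_coe_iff.mpr ?_)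
    linarith [sq_nonneg (2 / c)]
  by_cases htop : ∀ y, legendre ψ y = ⊤
  · rw [Imup_eq_top_of_forall_legendre_eq_top hp μ htop]
    exact le_top
  push Not at htop
  obtain ⟨m, hIm, hmψ, y₀, hy₀⟩ := exists_forall_le_coe_add_one hIψ htop
  have hgrowth := legendre_ge_mul_one_add_norm_sub hid hbary hr hδ hmass hbot hint hae
    (by linarith) hmψ hy₀ (by linarith)
  refine (coe_add_le_Imup (hlintegral _ y₀ m (by linarith) hmψ hgrowth)).trans'
    (EReal.coe_le_coe_iff.mpr ?_)
  linarith [neg_sq_le_mul_rpow_sub hc (by linarith : 0 ≤ m)]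
end
end

section
/- Let p > 0 and let μ be a probability measure on ℝⁿ with ∫|x| dμ < ∞. For δ > 0 define ψ_δ(x) = −δ + ε|x| with ε = δ^{1 + p/(4n)}. Then for all sufficiently small δ > 0, I_{μ,p}(ψ_δ) = ∫ ψ_δ dμ + (∫_{ℝⁿ} (ψ_δ*(x))^{-(n+p)} dx)^{-2/p} < 0. -/
open MeasureTheory Filter
open scoped ENNReal RealInnerProductSpace

noncomputable section

open Topology Metric

/-!
Since `⟪x, y⟫ ≤ ε ‖x‖` for `‖y‖ ≤ ε`, the Legendre transform of `ψ_δ = -δ + ε ‖·‖` is at most `δ`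
on the ball of radius `ε`, so `∫ (ψ_δ*)^{-(n+p)} ≥ δ^{-(n+p)} ε^n |B₁|`. With `ε = δ^{1 + p/(4n)}`
the second term of `I_{μ,p}(ψ_δ)` is therefore at most `|B₁|^{-2/p} δ^{3/2}`, while the first one is
`-δ + ε ∫ ‖x‖ dμ`. Both positive contributions are `o(δ)`, so `-δ` wins for small `δ`.
-/

section Legendre

variable {n : ℕ} {δ ε : ℝ}

lemma legendre_neg_add_mul_norm_le {y : En n} (hy : ‖y‖ ≤ ε) :
    legendre (fun x : En n => ((-δ + ε * ‖x‖ : ℝ) : EReal)) y ≤ ((δ : ℝ) : EReal) := by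
  refine iSup_le fun ⟨x, _⟩ => ?_
  rw [← EReal.coe_sub, EReal.coe_le_coe_iff]
  nlinarith [real_inner_le_norm x y, mul_le_mul_of_nonneg_left hy (norm_nonneg x)]

lemma ofReal_rpow_neg_le_negPow {t : EReal} {s : ℝ} (hs : 0 ≤ s)
    (ht : t ≤ ((δ : ℝ) : EReal)) : ENNReal.ofReal (δ ^ (-s)) ≤ negPow t s := by
  have htop : t ≠ ⊤ := ne_top_of_le_ne_top (EReal.coe_ne_top δ) ht
  rw [negPow, if_neg htop]
  split_ifs with h0
  · exact le_top
  · lift t to ℝ using ⟨htop, ne_bot_of_gt (not_le.mp h0)⟩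
    rw [EReal.toReal_coe]
    exact ENNReal.ofReal_le_ofReal <| Real.rpow_le_rpow_of_nonpos
      (EReal.coe_pos.mp (not_le.mp h0)) (EReal.coe_le_coe_iff.mp ht) (neg_nonpos.mpr hs)

lemma ofReal_le_lintegral_negPow_legendre (hδ : 0 ≤ δ) {s : ℝ} (hs : 0 ≤ s) :
    ENNReal.ofReal (δ ^ (-s) * volume.real (closedBall (0 : En n) ε)) ≤
      ∫⁻ y, negPow (legendre (fun x : En n => ((-δ + ε * ‖x‖ : ℝ) : EReal)) y) s := by
  rw [ENNReal.ofReal_mul (by positivity), measureReal_def,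
    ENNReal.ofReal_toReal measure_closedBall_lt_top.ne,
    ← lintegral_indicator_const measurableSet_closedBall]
  refine lintegral_mono fun y => ?_
  by_cases hy : y ∈ closedBall (0 : En n) ε
  · rw [Set.indicator_of_mem hy]
    exact ofReal_rpow_neg_le_negPow hs
      (legendre_neg_add_mul_norm_le (mem_closedBall_zero_iff.mp hy))
  · rw [Set.indicator_of_notMem hy]
    exact zero_le

lemma Imup_neg_add_mul_norm_le {p : ℝ} (hp : 0 < p) {μ : Measure (En n)}
    [IsProbabilityMeasure μ] (hmom : Integrable (fun x : En n => ‖x‖) μ) (hδ : 0 < δ)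
    (hε : 0 < ε) :
    Imup n p μ (fun x => ((-δ + ε * ‖x‖ : ℝ) : EReal)) ≤
      ((-δ + ε * ∫ x, ‖x‖ ∂μ +
        (δ ^ (-((n : ℝ) + p)) * volume.real (closedBall (0 : En n) ε)) ^ (-(2 : ℝ) / p) : ℝ) :
        EReal) := by
  have hball : 0 < δ ^ (-((n : ℝ) + p)) * volume.real (closedBall (0 : En n) ε) :=
    mul_pos (Real.rpow_pos_of_pos hδ _)
      (ENNReal.toReal_pos (measure_closedBall_pos _ _ hε).ne' measure_closedBall_lt_top.ne)
  have hlin : (∫⁻ y, negPow (legendre (fun x : En n => ((-δ + ε * ‖x‖ : ℝ) : EReal)) y)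
      ((n : ℝ) + p)) ^ (-(2 : ℝ) / p) ≤
      ENNReal.ofReal ((δ ^ (-((n : ℝ) + p)) * volume.real (closedBall (0 : En n) ε)) ^
        (-(2 : ℝ) / p)) := by
    rw [← ENNReal.ofReal_rpow_of_pos hball, neg_div, ENNReal.rpow_neg, ENNReal.rpow_neg]
    exact ENNReal.inv_le_inv.mpr <| ENNReal.rpow_le_rpow
      (ofReal_le_lintegral_negPow_legendre hδ.le (by positivity)) (by positivity)
  have hμ : ∫ x, ((-δ + ε * ‖x‖ : ℝ) : EReal).toReal ∂μ = -δ + ε * ∫ x, ‖x‖ ∂μ := by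
    simp only [EReal.toReal_coe]
    rw [integral_add (integrable_const _) (hmom.const_mul ε), integral_const_mul]
    simp
  rw [Imup, hμ, EReal.coe_add (-δ + _)]
  refine add_le_add le_rfl ((EReal.coe_ennreal_le_coe_ennreal_iff.mpr hlin).trans_eq ?_)
  rw [EReal.coe_ennreal_ofReal, max_eq_left (by positivity)]

end Legendre

lemma rpow_neg_add_mul_volume_closedBall_rpow {n : ℕ} (hn : 0 < n) {p : ℝ} (hp : 0 < p)
    {δ : ℝ} (hδ : 0 < δ) :
    (δ ^ (-((n : ℝ) + p)) * volume.real (closedBall (0 : En n) (δ ^ (1 + p / (4 * n))))) ^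
        (-(2 : ℝ) / p) =
      volume.real (closedBall (0 : En n) 1) ^ (-(2 : ℝ) / p) * δ ^ ((3 : ℝ) / 2) := by
  have hn' : (0 : ℝ) < n := Nat.cast_pos.mpr hn
  have hexp : -((n : ℝ) + p) + (1 + p / (4 * n)) * n = -(3 * p / 4) := by
    field_simp
    ring
  rw [Measure.addHaar_real_closedBall' _ _ (by positivity), finrank_euclideanSpace_fin,
    ← Real.rpow_natCast, ← Real.rpow_mul hδ.le, ← mul_assoc, ← Real.rpow_add hδ, hexp,
    Real.mul_rpow (by positivity) measureReal_nonneg, ← Real.rpow_mul hδ.le,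
    show -(3 * p / 4) * (-(2 : ℝ) / p) = 3 / 2 by field_simp; ring, mul_comm]

lemma eventually_mul_rpow_add_mul_rpow_lt_self {a b : ℝ} (ha : 1 < a) (hb : 1 < b) (M A : ℝ) :
    ∀ᶠ δ in 𝓝[>] (0 : ℝ), M * δ ^ a + A * δ ^ b < δ := by
  have hlim : Tendsto (fun δ : ℝ => M * δ ^ (a - 1) + A * δ ^ (b - 1)) (𝓝 0) (𝓝 0) := by
    have hcont : ContinuousAt (fun δ : ℝ => M * δ ^ (a - 1) + A * δ ^ (b - 1)) 0 :=
      (continuousAt_const.mul (Real.continuousAt_rpow_const 0 _ (Or.inr (by linarith)))).add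
        (continuousAt_const.mul (Real.continuousAt_rpow_const 0 _ (Or.inr (by linarith))))
    have h0 := hcont.tendsto
    rwa [Real.zero_rpow (sub_ne_zero.mpr ha.ne'), Real.zero_rpow (sub_ne_zero.mpr hb.ne'),
      mul_zero, mul_zero, add_zero] at h0
  filter_upwards [self_mem_nhdsWithin,
    nhdsWithin_le_nhds (hlim.eventually (gt_mem_nhds one_pos))] with δ (hδ : 0 < δ) hsmall
  calc M * δ ^ a + A * δ ^ b = δ * (M * δ ^ (a - 1) + A * δ ^ (b - 1)) := by
        rw [Real.rpow_sub hδ, Real.rpow_sub hδ, Real.rpow_one]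
        field_simp
    _ < δ * 1 := mul_lt_mul_of_pos_left hsmall hδ
    _ = δ := mul_one δ

theorem statement8 {n : ℕ} (hn : 0 < n) (p : ℝ) (hp : 0 < p) (μ : Measure (En n))
    [IsProbabilityMeasure μ] (hmom : Integrable (fun x : En n => ‖x‖) μ) :
    ∃ δ₀ > (0 : ℝ), ∀ δ : ℝ, 0 < δ → δ < δ₀ →
      Imup n p μ (fun x => ((-δ + δ ^ (1 + p / (4 * (n : ℝ))) * ‖x‖ : ℝ) : EReal)) < 0 := by
  have hq : 1 < 1 + p / (4 * (n : ℝ)) := lt_add_of_pos_right 1 (by positivity)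
  obtain ⟨δ₀, hδ₀, hsmall⟩ := mem_nhdsGT_iff_exists_Ioo_subset.mp
    (eventually_mul_rpow_add_mul_rpow_lt_self hq (by norm_num : (1 : ℝ) < 3 / 2)
      (∫ x, ‖x‖ ∂μ) (volume.real (closedBall (0 : En n) 1) ^ (-(2 : ℝ) / p)))
  refine ⟨δ₀, hδ₀, fun δ hδ hδlt => ?_⟩
  refine (Imup_neg_add_mul_norm_le hp hmom hδ (Real.rpow_pos_of_pos hδ _)).trans_lt ?_
  rw [rpow_neg_add_mul_volume_closedBall_rpow hn hp hδ]
  have hlt : _ < δ := hsmall ⟨hδ, hδlt⟩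
  rw [← EReal.coe_zero, EReal.coe_lt_coe_iff]
  linarith
end
end

section
/- Let μ be a Borel measure on ℝⁿ and ψ: ℝⁿ → ℝ ∪ {+∞} a convex μ-integrable function. Then dom(ψ) contains the interior of conv(supp(μ)). -/
open MeasureTheory Filter
open scoped ENNReal RealInnerProductSpace

noncomputable section

/-!
Convexity of `ψ` makes `dom ψ` convex, and since `ψ < ∞` almost everywhere, every point of the
support of `μ` is a limit of points of `dom ψ`. Hence `conv (supp μ)` lies in the closure of the
convex set `dom ψ`, and in finite dimensions the interior of the closure of a convex set is
its interior.
-/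

theorem EReal.coe_mul_ne_top {a : ℝ} {t : EReal} (ha : 0 ≤ a) (ht : t ≠ ⊤) :
    (a : EReal) * t ≠ ⊤ :=
  (EReal.mul_ne_top _ _).2
    ⟨Or.inl (EReal.coe_ne_bot a), Or.inl (EReal.coe_nonneg.2 ha), Or.inl (EReal.coe_ne_top a),
      Or.inr ht⟩

theorem EConvexOn.convex_domain {n : ℕ} {ψ : En n → EReal} (hψ : EConvexOn ψ) :
    Convex ℝ {x | ψ x < ⊤} := by
  intro x hx y hy a b ha hb hab
  exact (hψ x y a b ha hb hab).trans_lt <| EReal.add_lt_top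
    (EReal.coe_mul_ne_top ha hx.ne) (EReal.coe_mul_ne_top hb hy.ne)

theorem msupport_subset_closure_of_ae_mem {n : ℕ} {μ : Measure (En n)} {s : Set (En n)}
    (hs : ∀ᵐ x ∂μ, x ∈ s) : msupport μ ⊆ closure s := by
  intro y hy
  rw [mem_closure_iff]
  intro U hU hyU
  by_contra hdisj
  have hUs : U ⊆ {x | x ∉ s} := fun z hz hzs => hdisj ⟨z, hz, hzs⟩
  exact (hy U hU hyU).ne' (measure_mono_null hUs (ae_iff.1 hs))

theorem Convex.interior_closure_eq_interior {E : Type*} [NormedAddCommGroup E]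
    [NormedSpace ℝ E] [FiniteDimensional ℝ E] {s : Set E} (hs : Convex ℝ s) :
    interior (closure s) = interior s := by
  rcases (interior (closure s)).eq_empty_or_nonempty with hempty | hne
  · rw [hempty]
    exact (Set.eq_empty_of_subset_empty (hempty ▸ interior_mono subset_closure)).symm
  · have hspan : affineSpan ℝ (closure s) = ⊤ :=
      hs.closure.interior_nonempty_iff_affineSpan_eq_top.1 hne
    have hclosure_le : affineSpan ℝ (closure s) ≤ affineSpan ℝ s :=
      affineSpan_le.2 <|
        closure_minimal (subset_affineSpan ℝ s) (affineSpan ℝ s).closed_of_finiteDimensional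
    exact hs.interior_closure_eq_interior_of_nonempty_interior <|
      hs.interior_nonempty_iff_affineSpan_eq_top.2 (top_le_iff.1 (hspan ▸ hclosure_le))

theorem statement9_general {n : ℕ} (μ : Measure (En n)) (ψ : En n → EReal)
    (hconv : EConvexOn ψ)
    (hae : ∀ᵐ x ∂μ, ψ x ≠ ⊤) :
    interior (convexHull ℝ (msupport μ)) ⊆ {x | ψ x < ⊤} := by
  have hdom := hconv.convex_domain
  have hsupp : msupport μ ⊆ closure {x | ψ x < ⊤} :=
    msupport_subset_closure_of_ae_mem (hae.mono fun _ hx => lt_top_iff_ne_top.2 hx)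
  calc interior (convexHull ℝ (msupport μ))
      ⊆ interior (closure {x | ψ x < ⊤}) := interior_mono (convexHull_min hsupp hdom.closure)
    _ = interior {x | ψ x < ⊤} := hdom.interior_closure_eq_interior
    _ ⊆ {x | ψ x < ⊤} := interior_subset

theorem statement9 {n : ℕ} (μ : Measure (En n)) (ψ : En n → EReal)
    (hconv : EConvexOn ψ)
    (hint : Integrable (fun x => (ψ x).toReal) μ) (hae : ∀ᵐ x ∂μ, ψ x ≠ ⊤) :
    interior (convexHull ℝ (msupport μ)) ⊆ {x | ψ x < ⊤} :=
  statement9_general μ ψ hconv hae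
end
end

section
/- Let q > 0 and let φ: ℝⁿ → (0, ∞) be a positive convex function. Then ∫_{ℝⁿ} φ^{-(n+q)} < ∞ if and only if φ(x) → +∞ as |x| → ∞. Moreover, in this case there exist α, β > 0 with φ(x) ≥ α + β|x| for all x ∈ ℝⁿ. -/
/-!
If `∫ φ^{-(n+q)} < ∞`, Markov's inequality gives every sublevel set `{φ < M}` finite volume.
These sets are open and convex, and a convex set containing a ball of radius `r` and a point at
distance `D` contains about `D / 2r` disjoint balls of radius `r / 2` along the segment between
them; so sublevel sets of finite volume are bounded, i.e. `φ → ∞`.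

Conversely, if `φ ≥ φ 0 + 1` on the sphere of radius `R`, convexity along rays from `0` gives
`φ x ≥ φ 0 + ‖x‖ / R` outside it, and together with `min φ > 0` on the ball this yields
`φ ≥ α + β ‖x‖`. Then `φ^{-(n+q)} ≤ C (1 + ‖x‖)^{-(n+q)}`, which is integrable as `n + q > n`.
-/

open MeasureTheory Filter
open scoped ENNReal

noncomputable section

open Metric Bornology Set
open scoped Topology

section ConvexSet

variable {E : Type*} [NormedAddCommGroup E] [NormedSpace ℝ E] {s : Set E}

lemma Convex.ball_add_smul_sub_subset (hs : Convex ℝ s) {x y : E} {r t : ℝ}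
    (hball : ball x r ⊆ s) (hy : y ∈ s) (ht0 : 0 ≤ t) (ht1 : t < 1) :
    ball (x + t • (y - x)) ((1 - t) * r) ⊆ s := by
  intro z hz
  have ht : 0 < 1 - t := sub_pos.2 ht1
  set w := (1 - t)⁻¹ • (z - (x + t • (y - x)))
  have hw : x + w ∈ s := by
    apply hball
    rw [mem_ball, dist_eq_norm] at hz ⊢
    rw [add_sub_cancel_left, norm_smul, norm_inv, Real.norm_of_nonneg ht.le]
    exact (inv_mul_lt_iff₀ ht).2 hz
  have hz_eq : z = (1 - t) • (x + w) + t • y := by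
    simp only [w, smul_add, smul_smul, mul_inv_cancel₀ ht.ne', one_smul]
    module
  rw [hz_eq]
  exact hs hw hy ht.le ht0 (by ring)

variable [MeasurableSpace E] [BorelSpace E] (μ : Measure E) [μ.IsAddHaarMeasure]

lemma Convex.natCast_mul_measure_ball_le (hs : Convex ℝ s) {x : E} {r : ℝ}
    (hball : ball x r ⊆ s) (hr : 0 < r) (hs_unbdd : ¬IsBounded s) (k : ℕ) :
    k * μ (ball (0 : E) (r / 2)) ≤ μ s := by
  obtain ⟨y, hy, hfar⟩ : ∃ y ∈ s, 2 * k * r < dist y x := by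
    by_contra! h
    exact hs_unbdd (isBounded_closedBall.subset fun y hy => mem_closedBall.2 (h y hy))
  set D := dist y x with hD_def
  have hD : 0 < D := lt_of_le_of_lt (by positivity) hfar
  set c : ℕ → E := fun j => x + (j * r / D) • (y - x)
  have hsub : ∀ j ∈ Finset.range k, ball (c j) (r / 2) ⊆ s := by
    intro j hj
    have hj : (j : ℝ) + 1 ≤ k := by exact_mod_cast Finset.mem_range.1 hj
    have ht : j * r / D ≤ 1 / 2 := by
      rw [div_le_iff₀ hD]; nlinarith
    refine (ball_subset_ball ?_).trans
      (hs.ball_add_smul_sub_subset hball hy (by positivity) (by linarith))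
    nlinarith
  have hdisj : (Finset.range k : Set ℕ).PairwiseDisjoint fun j => ball (c j) (r / 2) := by
    intro i _ j _ hij
    apply ball_disjoint_ball
    have hij : (1 : ℝ) ≤ |(i : ℝ) - j| := by
      exact_mod_cast Int.one_le_abs (sub_ne_zero.2 (Int.natCast_inj.not.2 hij))
    have hcij : dist (c i) (c j) = |(i : ℝ) - j| * r := by
      simp only [c]
      rw [dist_add_left, dist_eq_norm, ← sub_smul, norm_smul, Real.norm_eq_abs,
        ← dist_eq_norm y x, ← hD_def, ← sub_div, ← sub_mul, abs_div, abs_mul, abs_of_pos hr,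
        abs_of_pos hD]
      field_simp
    rw [hcij]
    nlinarith
  calc k * μ (ball (0 : E) (r / 2)) = ∑ j ∈ Finset.range k, μ (ball (c j) (r / 2)) := by
        simp [Measure.addHaar_ball_center]
    _ = μ (⋃ j ∈ Finset.range k, ball (c j) (r / 2)) :=
        (measure_biUnion_finset hdisj fun _ _ => measurableSet_ball).symm
    _ ≤ μ s := measure_mono (iUnion₂_subset hsub)

lemma Convex.isBounded_of_measure_lt_top [FiniteDimensional ℝ E] (hs : Convex ℝ s)
    (hs_int : (interior s).Nonempty) (hμs : μ s < ∞) : IsBounded s := by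
  by_contra hs_unbdd
  obtain ⟨x, hx⟩ := hs_int
  obtain ⟨r, hr, hball⟩ := Metric.isOpen_iff.1 isOpen_interior x hx
  have hball_pos : μ (ball (0 : E) (r / 2)) ≠ 0 := (measure_ball_pos μ _ (by positivity)).ne'
  have hball_fin : μ (ball (0 : E) (r / 2)) ≠ ∞ := measure_ball_lt_top.ne
  have hlim : Tendsto (fun k : ℕ => (k : ℝ≥0∞) * μ (ball (0 : E) (r / 2))) atTop (𝓝 ∞) := by
    simpa [ENNReal.top_mul hball_pos] using
      ENNReal.Tendsto.mul_const ENNReal.tendsto_nat_nhds_top (Or.inr hball_fin)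
  have := le_of_tendsto' hlim
    (hs.natCast_mul_measure_ball_le μ (hball.trans interior_subset) hr hs_unbdd)
  exact hμs.ne (top_le_iff.1 this)

end ConvexSet

lemma measure_sublevel_lt_top_of_lintegral_rpow_neg_lt_top {α : Type*} [MeasurableSpace α]
    {μ : Measure α} {f : α → ℝ} (hf : Measurable f) (hf_pos : ∀ x, 0 < f x) {p : ℝ} (hp : 0 ≤ p)
    (hint : ∫⁻ x, ENNReal.ofReal (f x ^ (-p)) ∂μ < ∞) (M : ℝ) : μ {x | f x < M} < ∞ := by
  have hM : 0 < max M 1 := lt_max_of_lt_right one_pos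
  have hsub : {x | f x < M} ⊆
      {x | ENNReal.ofReal (max M 1 ^ (-p)) ≤ ENNReal.ofReal (f x ^ (-p))} := fun x hx =>
    ENNReal.ofReal_le_ofReal <| Real.rpow_le_rpow_of_nonpos (hf_pos x)
      (le_max_of_le_left (le_of_lt hx)) (neg_nonpos.2 hp)
  calc μ {x | f x < M}
      ≤ (∫⁻ x, ENNReal.ofReal (f x ^ (-p)) ∂μ) / ENNReal.ofReal (max M 1 ^ (-p)) :=
        (measure_mono hsub).trans <| meas_ge_le_lintegral_div (by fun_prop)
          (ENNReal.ofReal_pos.2 (by positivity)).ne' ENNReal.ofReal_ne_top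
    _ < ∞ := ENNReal.div_lt_top hint.ne (ENNReal.ofReal_pos.2 (by positivity)).ne'

section ConvexFunction

variable {E : Type*} [NormedAddCommGroup E] [NormedSpace ℝ E] {φ : E → ℝ}

lemma ConvexOn.continuous [FiniteDimensional ℝ E] (hφ : ConvexOn ℝ univ φ) : Continuous φ :=
  continuousOn_univ.1 (hφ.continuousOn isOpen_univ)

lemma ConvexOn.tendsto_cobounded_atTop_of_measure_sublevel_lt_top [MeasurableSpace E]
    [BorelSpace E] [FiniteDimensional ℝ E] (μ : Measure E) [μ.IsAddHaarMeasure]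
    (hφ : ConvexOn ℝ univ φ) (hsub : ∀ M, μ {x | φ x < M} < ∞) :
    Tendsto φ (cobounded E) atTop := by
  refine tendsto_atTop.2 fun M => ?_
  set U := {x | φ x < max M (φ 0 + 1)}
  have hU_open : IsOpen U := isOpen_lt hφ.continuous continuous_const
  have hU_convex : Convex ℝ U := by
    simpa only [mem_univ, true_and] using hφ.convex_lt (max M (φ 0 + 1))
  have h0U : (0 : E) ∈ U := show φ 0 < _ from lt_max_of_lt_right (lt_add_one _)
  have hU_bdd : IsBounded U :=
    hU_convex.isBounded_of_measure_lt_top μ (hU_open.interior_eq.symm ▸ ⟨0, h0U⟩) (hsub _)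
  filter_upwards [isBounded_def.1 hU_bdd] with x hx
  exact (le_max_left _ _).trans (not_lt.1 hx)

lemma ConvexOn.apply_smul_sub_le (hφ : ConvexOn ℝ univ φ) (x : E) {t : ℝ} (ht0 : 0 ≤ t)
    (ht1 : t ≤ 1) : φ (t • x) - φ 0 ≤ t * (φ x - φ 0) := by
  have := hφ.2 (mem_univ 0) (mem_univ x) (sub_nonneg.2 ht1) ht0 (by ring)
  simp only [smul_zero, zero_add, smul_eq_mul] at this
  linarith

lemma ConvexOn.add_norm_div_le (hφ : ConvexOn ℝ univ φ) {R : ℝ} (hR : 0 < R)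
    (hsphere : ∀ x, ‖x‖ = R → φ 0 + 1 ≤ φ x) {x : E} (hx : R ≤ ‖x‖) :
    φ 0 + ‖x‖ / R ≤ φ x := by
  have hx0 : 0 < ‖x‖ := hR.trans_le hx
  have hux : ‖(R / ‖x‖) • x‖ = R := by
    rw [norm_smul, Real.norm_of_nonneg (by positivity), div_mul_cancel₀ _ hx0.ne']
  have key : 1 ≤ R / ‖x‖ * (φ x - φ 0) := by
    linarith [hsphere _ hux, hφ.apply_smul_sub_le x (by positivity) ((div_le_one hx0).2 hx)]
  rw [div_mul_eq_mul_div, le_div_iff₀ hx0, one_mul] at key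
  have : ‖x‖ / R ≤ φ x - φ 0 := by rw [div_le_iff₀ hR]; linarith
  linarith

lemma ConvexOn.exists_pos_add_mul_norm_le [FiniteDimensional ℝ E] (hφ : ConvexOn ℝ univ φ)
    (hpos : ∀ x, 0 < φ x) (htend : Tendsto φ (cobounded E) atTop) :
    ∃ α > (0 : ℝ), ∃ β > (0 : ℝ), ∀ x, α + β * ‖x‖ ≤ φ x := by
  obtain ⟨R₀, -, hR₀⟩ :=
    hasBasis_cobounded_norm.eventually_iff.1 (htend.eventually_ge_atTop (φ 0 + 1))
  set R := max R₀ 1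
  have hR : 0 < R := lt_max_of_lt_right one_pos
  have hgrowth {x : E} (hx : R ≤ ‖x‖) : φ 0 + ‖x‖ / R ≤ φ x :=
    hφ.add_norm_div_le hR (fun y hy => hR₀ (show R₀ ≤ ‖y‖ from hy ▸ le_max_left R₀ 1)) hx
  obtain ⟨z, -, hz⟩ := (isCompact_closedBall (0 : E) R).exists_isMinOn
    (nonempty_closedBall.2 hR.le) hφ.continuous.continuousOn
  set m := φ z
  have hm : 0 < m := hpos z
  have hm0 : m ≤ φ 0 := hz (mem_closedBall_self hR.le)
  set β := min (m / (2 * R)) (1 / R)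
  refine ⟨m / 2, by positivity, β, by positivity, fun x => ?_⟩
  rcases le_or_gt ‖x‖ R with hx | hx
  · have h1 : β * ‖x‖ ≤ m / (2 * R) * R :=
      mul_le_mul (min_le_left _ _) hx (norm_nonneg x) (by positivity)
    have h2 : m / (2 * R) * R = m / 2 := by field_simp
    have h3 : m ≤ φ x := hz (mem_closedBall_zero_iff.2 hx)
    linarith
  · have h1 : β * ‖x‖ ≤ 1 / R * ‖x‖ :=
      mul_le_mul_of_nonneg_right (min_le_right _ _) (norm_nonneg x)
    have h2 : 1 / R * ‖x‖ = ‖x‖ / R := by ring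
    linarith [hgrowth hx.le]

end ConvexFunction

lemma lintegral_rpow_neg_lt_top_of_add_mul_norm_le {E : Type*} [NormedAddCommGroup E]
    [NormedSpace ℝ E] [MeasurableSpace E] [BorelSpace E] [FiniteDimensional ℝ E]
    (μ : Measure E) [μ.IsAddHaarMeasure] {f : E → ℝ} {p : ℝ}
    (hp : (Module.finrank ℝ E : ℝ) < p) {α β : ℝ} (hα : 0 < α) (hβ : 0 < β)
    (hf : ∀ x, α + β * ‖x‖ ≤ f x) :
    ∫⁻ x, ENNReal.ofReal (f x ^ (-p)) ∂μ < ∞ := by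
  have hp0 : 0 ≤ p := (Nat.cast_nonneg _).trans hp.le
  set c := min α β
  have hc : 0 < c := lt_min hα hβ
  have hle (x : E) : ENNReal.ofReal (f x ^ (-p)) ≤
      ENNReal.ofReal (c ^ (-p)) * ENNReal.ofReal ((1 + ‖x‖) ^ (-p)) := by
    rw [← ENNReal.ofReal_mul (by positivity), ← Real.mul_rpow hc.le (by positivity)]
    refine ENNReal.ofReal_le_ofReal (Real.rpow_le_rpow_of_nonpos (by positivity) ?_ (by linarith))
    nlinarith [hf x, min_le_left α β, min_le_right α β, norm_nonneg x]
  calc ∫⁻ x, ENNReal.ofReal (f x ^ (-p)) ∂μ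
      ≤ ∫⁻ x, ENNReal.ofReal (c ^ (-p)) * ENNReal.ofReal ((1 + ‖x‖) ^ (-p)) ∂μ :=
        lintegral_mono hle
    _ = ENNReal.ofReal (c ^ (-p)) * ∫⁻ x, ENNReal.ofReal ((1 + ‖x‖) ^ (-p)) ∂μ :=
        lintegral_const_mul' _ _ ENNReal.ofReal_ne_top
    _ < ∞ := ENNReal.mul_lt_top ENNReal.ofReal_lt_top (finite_integral_one_add_norm hp)

theorem statement10 {n : ℕ} (q : ℝ) (hq : 0 < q) (φ : En n → ℝ)
    (hconv : ConvexOn ℝ Set.univ φ) (hpos : ∀ x, 0 < φ x) :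
    ((∫⁻ x, ENNReal.ofReal (φ x ^ (-((n : ℝ) + q)))) < ⊤ ↔
      Tendsto φ (comap norm atTop) atTop) ∧
    ((∫⁻ x, ENNReal.ofReal (φ x ^ (-((n : ℝ) + q)))) < ⊤ →
      ∃ α > (0 : ℝ), ∃ β > (0 : ℝ), ∀ x : En n, α + β * ‖x‖ ≤ φ x) := by
  rw [comap_norm_atTop]
  have htend (hint : (∫⁻ x, ENNReal.ofReal (φ x ^ (-((n : ℝ) + q)))) < ⊤) :
      Tendsto φ (cobounded (En n)) atTop :=
    hconv.tendsto_cobounded_atTop_of_measure_sublevel_lt_top volume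
      (measure_sublevel_lt_top_of_lintegral_rpow_neg_lt_top hconv.continuous.measurable hpos
        (by positivity) hint)
  refine ⟨⟨htend, fun hlim => ?_⟩, fun hint => hconv.exists_pos_add_mul_norm_le hpos (htend hint)⟩
  obtain ⟨α, hα, β, hβ, hφ⟩ := hconv.exists_pos_add_mul_norm_le hpos hlim
  exact lintegral_rpow_neg_lt_top_of_add_mul_norm_le volume (by simpa using hq) hα hβ hφ
end
end

section
/- Let ψ: ℝⁿ → ℝ ∪ {+∞} be a proper convex μ-integrable function (with ψ(0) finite) whose domain dom(ψ) is bounded, where 0 is interior to dom(ψ). For t ∈ ℝ define ψ_t = ψ + t and φ_t = ψ_t*. Then for every t < −ψ(0), φ_t: ℝⁿ → ℝ is a positive convex function with 0 < ∫_{ℝⁿ} φ_t^{-(n+p)} < ∞, and for any given A > 0 there exists t < −ψ(0) with ∫_{ℝⁿ} φ_t(x)^{-(n+p)} dx = A. -/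
open MeasureTheory Filter
open scoped ENNReal RealInnerProductSpace

noncomputable section

open Set Metric Bornology Module Topology
open scoped NNReal

/-!
Write `f` for `ψ` on its bounded domain `D`. As `0` is interior to `D`, `f` has a subgradient `w`
at `0`; hence `f` is bounded below on `D` and its conjugate `L = f*` is finite, convex and
Lipschitz, with minimum `L w = -ψ(0)`. Since `f` is bounded on a ball around `0` contained in `D`,
`L` also grows linearly, and `φ_t = L - t`.

For `t < -ψ(0)` the integrand `(L - t)^{-(n+p)}` is dominated by a multiple of
`(1 + ‖x‖)^{-(n+p)}`, so `I(t) = ∫ φ_t^{-(n+p)}` is finite, positive and continuous in `t`.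
Dominated convergence gives `I(t) → 0` as `t → -∞`. As `t → -ψ(0)`, with `δ = -ψ(0) - t` we have
`L - t ≤ 2δ` on a ball of radius comparable to `δ` around `w`, so `I(t) ≳ δ^{-p} → ∞`. The
intermediate value theorem then reaches every `A > 0`.
-/

section Subgradient

variable {E : Type*} [NormedAddCommGroup E] {s : Set E} {f : E → ℝ} {a : E}

theorem ConvexOn.exists_le_on_interior [NormedSpace ℝ E] [FiniteDimensional ℝ E]
    (hf : ConvexOn ℝ s f) (ha : a ∈ interior s) :
    ∃ l : E →L[ℝ] ℝ, ∀ x ∈ interior s, f a + l (x - a) ≤ f x := by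
  set U : Set (E × ℝ) := {q | q.1 ∈ interior s ∧ f q.1 < q.2}
  have hUconv : Convex ℝ U := (hf.subset interior_subset hf.1.interior).convex_strict_epigraph
  have hUopen : IsOpen U := by
    have hcont : ContinuousOn (fun q : E × ℝ => q.2 - f q.1) (Prod.fst ⁻¹' interior s) :=
      continuousOn_snd.sub (hf.continuousOn_interior.comp continuousOn_fst fun _ hq => hq)
    convert hcont.isOpen_inter_preimage (isOpen_interior.preimage continuous_fst)
      (isOpen_Ioi (a := 0)) using 1
    ext q
    simp [U]
  obtain ⟨φ, hφ⟩ := geometric_hahn_banach_open_point hUconv hUopen (x := (a, f a)) (by simp [U])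
  have hsplit (x : E) (u : ℝ) : φ (x, u) = φ (x, 0) + u * φ (0, 1) := by
    rw [← smul_eq_mul, ← map_smul, ← map_add, Prod.smul_mk, smul_zero, smul_eq_mul, mul_one,
      Prod.mk_add_mk, add_zero, zero_add]
  have hβ : 0 < -φ (0, 1) := by
    have := hφ (a, f a + 1) ⟨ha, lt_add_one _⟩
    rw [hsplit, hsplit a (f a)] at this
    linarith
  refine ⟨(-φ (0, 1))⁻¹ • φ.comp (.inl ℝ E ℝ), fun x hx => ?_⟩
  -- `(x, f x)` is a limit of points `(x, u)` of `U`, hence on the closed side of the hyperplane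
  have hx : φ (x, f x) ≤ φ (a, f a) :=
    le_of_tendsto ((φ.continuous.comp (Continuous.prodMk_right x)).tendsto (f x) |>.mono_left
      (nhdsWithin_le_nhds (s := Ioi (f x))))
      (eventually_nhdsWithin_of_forall fun u hu => (hφ (x, u) ⟨hx, hu⟩).le)
  rw [hsplit, hsplit a] at hx
  have := (inv_mul_le_iff₀ hβ).2 (show φ (x, 0) - φ (a, 0) ≤ -φ (0, 1) * (f x - f a) by linarith)
  simp only [FunLike.coe_smul, ContinuousLinearMap.coe_comp, Pi.smul_apply, Function.comp_apply,
    ContinuousLinearMap.inl_apply, smul_eq_mul, map_sub]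
  linarith

theorem ConvexOn.exists_le_of_mem_interior [NormedSpace ℝ E] [FiniteDimensional ℝ E]
    (hf : ConvexOn ℝ s f) (ha : a ∈ interior s) :
    ∃ l : E →L[ℝ] ℝ, ∀ x ∈ s, f a + l (x - a) ≤ f x := by
  obtain ⟨l, hl⟩ := hf.exists_le_on_interior ha
  refine ⟨l, fun x hx => ?_⟩
  have hm := hl _ (hf.1.combo_self_interior_mem_interior hx ha (a := 1 / 2) (b := 1 / 2)
    (by norm_num) (by norm_num) (by norm_num))
  have hconv := hf.2 hx (interior_subset ha) (by norm_num : (0 : ℝ) ≤ 1 / 2)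
    (by norm_num : (0 : ℝ) ≤ 1 / 2) (by norm_num)
  rw [show (1 / 2 : ℝ) • x + (1 / 2 : ℝ) • a - a = (1 / 2 : ℝ) • (x - a) by module,
    map_smul, smul_eq_mul] at hm
  simp only [smul_eq_mul] at hconv
  linarith

theorem ConvexOn.exists_inner_le_of_mem_interior [InnerProductSpace ℝ E] [FiniteDimensional ℝ E]
    (hf : ConvexOn ℝ s f) (ha : a ∈ interior s) : ∃ w : E, ∀ x ∈ s, f a + ⟪w, x - a⟫ ≤ f x := by
  obtain ⟨l, hl⟩ := hf.exists_le_of_mem_interior ha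
  exact ⟨(InnerProductSpace.toDual ℝ E).symm l, fun x hx => by
    simpa only [InnerProductSpace.toDual_symm_apply] using hl x hx⟩

theorem ConvexOn.exists_closedBall_subset_bddAbove [NormedSpace ℝ E] [FiniteDimensional ℝ E]
    (hf : ConvexOn ℝ s f) (ha : a ∈ interior s) :
    ∃ r > 0, closedBall a r ⊆ s ∧ BddAbove (f '' closedBall a r) := by
  obtain ⟨r, hr, hsub⟩ := nhds_basis_closedBall.mem_iff.1 (isOpen_interior.mem_nhds ha)
  exact ⟨r, hr, hsub.trans interior_subset,
    (isCompact_closedBall a r).bddAbove_image (hf.continuousOn_interior.mono hsub)⟩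

end Subgradient

section Conjugate

variable {E : Type*} [NormedAddCommGroup E] [InnerProductSpace ℝ E] {s : Set E} {f : E → ℝ}

/-- A real `⨆`: it is the junk value `0` unless `s` is nonempty and the family is bounded above. -/
def conjugateOn (s : Set E) (f : E → ℝ) (y : E) : ℝ :=
  ⨆ x : s, ⟪(x : E), y⟫ - f x

theorem bddAbove_range_inner_sub (hs : IsBounded s) (hf : BddBelow (f '' s)) (y : E) :
    BddAbove (range fun x : s => ⟪(x : E), y⟫ - f x) := by
  obtain ⟨R, hR⟩ := hs.exists_norm_le
  obtain ⟨m, hm⟩ := hf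
  refine ⟨R * ‖y‖ - m, ?_⟩
  rintro _ ⟨⟨x, hx⟩, rfl⟩
  have := hm (mem_image_of_mem f hx)
  nlinarith [real_inner_le_norm x y, norm_nonneg y, hR x hx]

theorem bddBelow_image_of_inner_le (hs : IsBounded s) {a : ℝ} {w : E}
    (hw : ∀ x ∈ s, a + ⟪w, x⟫ ≤ f x) : BddBelow (f '' s) := by
  obtain ⟨R, hR⟩ := hs.exists_norm_le
  refine ⟨a - ‖w‖ * R, ?_⟩
  rintro _ ⟨x, hx, rfl⟩
  have := (neg_le_of_abs_le (abs_real_inner_le_norm w x)).trans'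
    (neg_le_neg (mul_le_mul_of_nonneg_left (hR x hx) (norm_nonneg w)))
  linarith [hw x hx]

theorem inner_sub_le_conjugateOn (hs : IsBounded s) (hf : BddBelow (f '' s)) {x : E}
    (hx : x ∈ s) (y : E) : ⟪x, y⟫ - f x ≤ conjugateOn s f y :=
  le_ciSup (bddAbove_range_inner_sub hs hf y) ⟨x, hx⟩

theorem conjugateOn_le (hne : s.Nonempty) {y : E} {c : ℝ} (h : ∀ x ∈ s, ⟪x, y⟫ - f x ≤ c) :
    conjugateOn s f y ≤ c :=
  have := hne.to_subtype
  ciSup_le fun x => h x x.2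

theorem convexOn_conjugateOn (hs : IsBounded s) (hf : BddBelow (f '' s)) (hne : s.Nonempty) :
    ConvexOn ℝ univ (conjugateOn s f) := by
  refine ⟨convex_univ, fun y _ z _ a b ha hb hab => conjugateOn_le hne fun x hx => ?_⟩
  have hy := mul_le_mul_of_nonneg_left (inner_sub_le_conjugateOn hs hf hx y) ha
  have hz := mul_le_mul_of_nonneg_left (inner_sub_le_conjugateOn hs hf hx z) hb
  rw [inner_add_right, real_inner_smul_right, real_inner_smul_right, smul_eq_mul, smul_eq_mul]
  linear_combination hy + hz + f x * hab

theorem lipschitzWith_conjugateOn (hf : BddBelow (f '' s)) (hne : s.Nonempty) {R : ℝ≥0}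
    (hR : ∀ x ∈ s, ‖x‖ ≤ R) : LipschitzWith R (conjugateOn s f) := by
  have hs : IsBounded s := isBounded_iff_forall_norm_le.2 ⟨R, hR⟩
  refine LipschitzWith.of_le_add_mul R fun y z => conjugateOn_le hne fun x hx => ?_
  have hxR := hR x hx
  have h1 := inner_sub_le_conjugateOn hs hf hx z
  have h2 : ⟪x, y - z⟫ ≤ R * dist y z := by
    rw [dist_eq_norm]
    exact (real_inner_le_norm x _).trans (mul_le_mul_of_nonneg_right hxR (norm_nonneg _))
  rw [inner_sub_right] at h2
  linarith

theorem exists_mul_norm_sub_le_conjugateOn (hs : IsBounded s) (hf : BddBelow (f '' s)) {r : ℝ}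
    (hr : 0 ≤ r) (hball : closedBall 0 r ⊆ s) (hK : BddAbove (f '' closedBall 0 r)) :
    ∃ K, ∀ y, r * ‖y‖ - K ≤ conjugateOn s f y := by
  obtain ⟨K, hK⟩ := hK
  refine ⟨K, fun y => ?_⟩
  set x := (r / ‖y‖) • y
  have hx : x ∈ closedBall 0 r := by
    rcases eq_or_ne y 0 with rfl | hy
    · simpa [x] using hr
    · simp [x, norm_smul, abs_of_nonneg hr, hy]
  have hxy : ⟪x, y⟫ = r * ‖y‖ := by
    rcases eq_or_ne y 0 with rfl | hy
    · simp [x]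
    · rw [real_inner_smul_left, real_inner_self_eq_norm_sq]
      field_simp
  have := inner_sub_le_conjugateOn hs hf (hball hx) y
  linarith [hK (mem_image_of_mem f hx)]

theorem neg_le_conjugateOn (hs : IsBounded s) (hf : BddBelow (f '' s)) (h0 : (0 : E) ∈ s)
    (y : E) : -f 0 ≤ conjugateOn s f y := by
  simpa using inner_sub_le_conjugateOn hs hf h0 y

theorem conjugateOn_eq_neg_of_le (hs : IsBounded s) (hf : BddBelow (f '' s)) (h0 : (0 : E) ∈ s)
    {w : E} (hw : ∀ x ∈ s, f 0 + ⟪w, x⟫ ≤ f x) : conjugateOn s f w = -f 0 :=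
  le_antisymm (conjugateOn_le ⟨0, h0⟩ fun x hx => by linarith [hw x hx, real_inner_comm w x])
    (neg_le_conjugateOn hs hf h0 w)

end Conjugate

section Coercive

variable {E : Type*} [NormedAddCommGroup E] {L : E → ℝ} {c t : ℝ}

theorem exists_mul_one_add_norm_le_sub {r K : ℝ} (hr : 0 < r) (hmin : ∀ x, c ≤ L x)
    (hgrow : ∀ x, r * ‖x‖ - K ≤ L x) (ht : t < c) :
    ∃ ε > 0, ∀ x, ε * (1 + ‖x‖) ≤ L x - t := by
  set C := max (K + t) 0
  refine ⟨r * (c - t) / (c - t + C + r), by positivity, fun x => ?_⟩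
  rw [div_mul_eq_mul_div, div_le_iff₀ (by positivity)]
  have h1 : c - t ≤ L x - t := by linarith [hmin x]
  have h2 : r * ‖x‖ - C ≤ L x - t := by linarith [hgrow x, le_max_left (K + t) 0]
  nlinarith [le_max_right (K + t) 0]

theorem sub_pos_of_mul_one_add_norm_le {ε : ℝ} (hε : 0 < ε) (h : ∀ x, ε * (1 + ‖x‖) ≤ L x - t)
    (x : E) : 0 < L x - t :=
  (by positivity : 0 < ε * (1 + ‖x‖)).trans_le (h x)

end Coercive

section Legendre

variable {n : ℕ} {ψ : En n → EReal}

theorem EConvexOn.convexOn_toReal (hψ : EConvexOn ψ) (hbot : ∀ x, ψ x ≠ ⊥) :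
    ConvexOn ℝ {x | ψ x < ⊤} fun x => (ψ x).toReal := by
  have hcoe : ∀ x, ψ x < ⊤ → ψ x = ((ψ x).toReal : EReal) := fun x hx =>
    (EReal.coe_toReal hx.ne (hbot x)).symm
  have hcomb : ∀ x, ψ x < ⊤ → ∀ y, ψ y < ⊤ → ∀ a b : ℝ, 0 ≤ a → 0 ≤ b → a + b = 1 →
      ψ (a • x + b • y) ≤ ((a * (ψ x).toReal + b * (ψ y).toReal : ℝ) : EReal) := by
    intro x hx y hy a b ha hb hab
    simpa [← hcoe x hx, ← hcoe y hy] using hψ x y a b ha hb hab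
  refine ⟨fun x hx y hy a b ha hb hab => (hcomb x hx y hy a b ha hb hab).trans_lt
    (EReal.coe_lt_top _), fun x hx y hy a b ha hb hab => ?_⟩
  simpa only [smul_eq_mul, EReal.toReal_coe] using
    EReal.toReal_le_toReal (hcomb x hx y hy a b ha hb hab) (hbot _) (EReal.coe_ne_top _)

def realLegendre (ψ : En n → EReal) : En n → ℝ :=
  conjugateOn {x | ψ x < ⊤} fun x => (ψ x).toReal

theorem EConvexOn.bddBelow_toReal_image (hψ : EConvexOn ψ) (hbot : ∀ x, ψ x ≠ ⊥)
    (hs : IsBounded {x | ψ x < ⊤}) (h0 : (0 : En n) ∈ interior {x | ψ x < ⊤}) :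
    BddBelow ((fun x => (ψ x).toReal) '' {x | ψ x < ⊤}) := by
  obtain ⟨w, hw⟩ := (hψ.convexOn_toReal hbot).exists_inner_le_of_mem_interior h0
  exact bddBelow_image_of_inner_le hs fun x hx => by simpa using hw x hx

theorem EConvexOn.exists_realLegendre_eq (hψ : EConvexOn ψ) (hbot : ∀ x, ψ x ≠ ⊥)
    (hs : IsBounded {x | ψ x < ⊤}) (h0 : (0 : En n) ∈ interior {x | ψ x < ⊤}) :
    ∃ w, realLegendre ψ w = -(ψ 0).toReal := by
  obtain ⟨w, hw⟩ := (hψ.convexOn_toReal hbot).exists_inner_le_of_mem_interior h0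
  exact ⟨w, conjugateOn_eq_neg_of_le hs (hψ.bddBelow_toReal_image hbot hs h0)
    (interior_subset h0) fun x hx => by simpa using hw x hx⟩

theorem EConvexOn.exists_mul_one_add_norm_le_realLegendre_sub (hψ : EConvexOn ψ)
    (hbot : ∀ x, ψ x ≠ ⊥) (hs : IsBounded {x | ψ x < ⊤})
    (h0 : (0 : En n) ∈ interior {x | ψ x < ⊤}) {t : ℝ} (ht : t < -(ψ 0).toReal) :
    ∃ ε > 0, ∀ x, ε * (1 + ‖x‖) ≤ realLegendre ψ x - t := by
  have hf := hψ.bddBelow_toReal_image hbot hs h0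
  obtain ⟨r, hr, hball, hfr⟩ := (hψ.convexOn_toReal hbot).exists_closedBall_subset_bddAbove h0
  obtain ⟨K, hK⟩ := exists_mul_norm_sub_le_conjugateOn hs hf hr.le hball hfr
  exact exists_mul_one_add_norm_le_sub hr (neg_le_conjugateOn hs hf (interior_subset h0)) hK ht

theorem legendre_add_coe (hbot : ∀ x, ψ x ≠ ⊥) (hs : IsBounded {x | ψ x < ⊤})
    (hf : BddBelow ((fun x => (ψ x).toReal) '' {x | ψ x < ⊤})) (hne : {x | ψ x < ⊤}.Nonempty)
    (t : ℝ) (y : En n) :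
    legendre (fun z => ψ z + (t : EReal)) y = ((realLegendre ψ y - t : ℝ) : EReal) := by
  have := hne.to_subtype
  have hdom (z : En n) : ψ z < ⊤ ↔ ψ z + (t : EReal) < ⊤ :=
    ⟨fun h => EReal.add_lt_top h.ne (EReal.coe_ne_top t),
      fun h => lt_top_iff_ne_top.2 fun hz => by simp [hz] at h⟩
  rw [legendre, ← (Equiv.subtypeEquivRight hdom).iSup_comp, realLegendre, conjugateOn,
    Monotone.map_ciSup_of_continuousAt (f := fun u : ℝ => ((u - t : ℝ) : EReal))
      (continuous_coe_real_ereal.comp (continuous_sub_right t)).continuousAt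
      (fun u v huv => EReal.coe_le_coe_iff.2 (by linarith)) (bddAbove_range_inner_sub hs hf y)]
  refine iSup_congr fun x => ?_
  change ((⟪x.1, y⟫ : ℝ) : EReal) - (ψ x.1 + t) = _
  rw [← EReal.coe_toReal x.2.ne (hbot x.1)]
  norm_cast
  rw [EReal.toReal_coe]
  ring

theorem negPow_coe_of_pos {u : ℝ} (hu : 0 < u) (s : ℝ) :
    negPow u s = ENNReal.ofReal (u ^ (-s)) := by
  rw [negPow, if_neg (EReal.coe_ne_top u), if_neg (not_le.2 (EReal.coe_pos.2 hu)), EReal.toReal_coe]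

theorem lintegral_negPow_coe {α : Type*} [MeasurableSpace α] {μ : Measure α} {g : α → ℝ}
    (hg : ∀ x, 0 < g x) {s : ℝ} (hint : Integrable (fun x => g x ^ (-s)) μ) :
    ∫⁻ x, negPow (g x) s ∂μ = ENNReal.ofReal (∫ x, g x ^ (-s) ∂μ) := by
  rw [ofReal_integral_eq_lintegral_ofReal hint
    (Eventually.of_forall fun x => (Real.rpow_pos_of_pos (hg x) _).le)]
  exact lintegral_congr fun x => negPow_coe_of_pos (hg x) s

end Legendre

section Integral

variable {E : Type*} [NormedAddCommGroup E] [NormedSpace ℝ E] [FiniteDimensional ℝ E]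
  [MeasurableSpace E] [BorelSpace E] {μ : Measure E} [μ.IsAddHaarMeasure] {L : E → ℝ} {c s : ℝ}

theorem integrable_rpow_neg_of_mul_one_add_norm_le {g : E → ℝ} (hg : Continuous g) {ε : ℝ}
    (hε : 0 < ε) (hgε : ∀ x, ε * (1 + ‖x‖) ≤ g x) (hs : (finrank ℝ E : ℝ) < s) :
    Integrable (fun x => g x ^ (-s)) μ := by
  have hpos : ∀ x : E, 0 < ε * (1 + ‖x‖) := fun x => by positivity
  refine ((integrable_one_add_norm hs).const_mul (ε ^ (-s))).mono'
    (hg.rpow_const fun x => .inl ((hpos x).trans_le (hgε x)).ne').aestronglyMeasurable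
    (Eventually.of_forall fun x => ?_)
  have hs0 : 0 ≤ s := (Nat.cast_nonneg _).trans hs.le
  rw [Real.norm_of_nonneg (Real.rpow_nonneg ((hpos x).le.trans (hgε x)) _),
    ← Real.mul_rpow hε.le (by positivity)]
  exact Real.rpow_le_rpow_of_nonpos (hpos x) (hgε x) (by linarith)

theorem integrable_rpow_sub (hL : Continuous L)
    (hcoer : ∀ t < c, ∃ ε > 0, ∀ x, ε * (1 + ‖x‖) ≤ L x - t) (hs : (finrank ℝ E : ℝ) < s)
    {t : ℝ} (ht : t < c) : Integrable (fun x => (L x - t) ^ (-s)) μ := by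
  obtain ⟨ε, hε, h⟩ := hcoer t ht
  exact integrable_rpow_neg_of_mul_one_add_norm_le (hL.sub continuous_const) hε h hs

theorem integral_rpow_sub_pos (hL : Continuous L)
    (hcoer : ∀ t < c, ∃ ε > 0, ∀ x, ε * (1 + ‖x‖) ≤ L x - t) (hs : (finrank ℝ E : ℝ) < s)
    {t : ℝ} (ht : t < c) : 0 < ∫ x, (L x - t) ^ (-s) ∂μ := by
  obtain ⟨ε, hε, h⟩ := hcoer t ht
  have hpos x : 0 < (L x - t) ^ (-s) :=
    Real.rpow_pos_of_pos (sub_pos_of_mul_one_add_norm_le hε h x) _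
  rw [integral_pos_iff_support_of_nonneg (fun x => (hpos x).le)
    (integrable_rpow_sub hL hcoer hs ht), Function.support_eq_univ fun x => (hpos x).ne']
  exact isOpen_univ.measure_pos μ univ_nonempty

theorem continuousOn_integral_rpow_sub (hL : Continuous L)
    (hcoer : ∀ t < c, ∃ ε > 0, ∀ x, ε * (1 + ‖x‖) ≤ L x - t) (hs : (finrank ℝ E : ℝ) < s) :
    ContinuousOn (fun t => ∫ x, (L x - t) ^ (-s) ∂μ) (Iio c) := by
  intro t ht
  obtain ⟨t', htt', ht'c⟩ := exists_between (show t < c from ht)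
  obtain ⟨ε, hε, h⟩ := hcoer t' ht'c
  have hpos := sub_pos_of_mul_one_add_norm_le hε h
  have hs0 : 0 ≤ s := (Nat.cast_nonneg _).trans hs.le
  refine (continuousAt_of_dominated (bound := fun x => (L x - t') ^ (-s)) ?_ ?_
    (integrable_rpow_sub hL hcoer hs ht'c) ?_).continuousWithinAt
  · filter_upwards [Iio_mem_nhds ht] with τ hτ
    exact (integrable_rpow_sub hL hcoer hs hτ).aestronglyMeasurable
  · filter_upwards [Iio_mem_nhds htt'] with τ hτ
    refine Eventually.of_forall fun x => ?_
    have hτx : L x - t' ≤ L x - τ := by linarith [mem_Iio.1 hτ]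
    rw [Real.norm_of_nonneg (Real.rpow_nonneg ((hpos x).le.trans hτx) _)]
    exact Real.rpow_le_rpow_of_nonpos (hpos x) hτx (by linarith)
  · refine Eventually.of_forall fun x => ?_
    have hx : L x - t ≠ 0 := by linarith [hpos x]
    exact (Real.continuousAt_rpow_const _ _ (.inl hx)).comp
      (continuous_const.sub continuous_id).continuousAt

theorem tendsto_integral_rpow_sub_atBot (hL : Continuous L)
    (hcoer : ∀ t < c, ∃ ε > 0, ∀ x, ε * (1 + ‖x‖) ≤ L x - t) (hs : (finrank ℝ E : ℝ) < s) :
    Tendsto (fun t => ∫ x, (L x - t) ^ (-s) ∂μ) atBot (𝓝 0) := by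
  obtain ⟨t₀, ht₀⟩ := exists_lt c
  obtain ⟨ε, hε, h⟩ := hcoer t₀ ht₀
  have hpos := sub_pos_of_mul_one_add_norm_le hε h
  have hs0 : 0 < s := (Nat.cast_nonneg _).trans_lt hs
  simpa using tendsto_integral_filter_of_dominated_convergence (μ := μ) (f := fun _ => (0 : ℝ))
    (fun x => (L x - t₀) ^ (-s))
    ((eventually_lt_atBot t₀).mono fun τ hτ =>
      (integrable_rpow_sub hL hcoer hs (hτ.trans ht₀)).aestronglyMeasurable)
    ((eventually_le_atBot t₀).mono fun τ hτ => Eventually.of_forall fun x => by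
      have hτx : L x - t₀ ≤ L x - τ := by linarith
      rw [Real.norm_of_nonneg (Real.rpow_nonneg ((hpos x).le.trans hτx) _)]
      exact Real.rpow_le_rpow_of_nonpos (hpos x) hτx (by linarith))
    (integrable_rpow_sub hL hcoer hs ht₀)
    (Eventually.of_forall fun x => (tendsto_rpow_neg_atTop hs0).comp <|
      (tendsto_atTop_add_const_left _ (L x) tendsto_neg_atBot_atTop).congr fun τ =>
        (sub_eq_add_neg _ _).symm)

theorem mul_rpow_le_integral_rpow_sub
    (hcoer : ∀ t < c, ∃ ε > 0, ∀ x, ε * (1 + ‖x‖) ≤ L x - t) (hs : (finrank ℝ E : ℝ) < s)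
    {R : ℝ≥0} (hLip : LipschitzWith R L) {x₀ : E} (hx₀ : L x₀ = c) {t : ℝ} (ht : t < c) :
    2 ^ (-s) * μ.real (ball 0 1) / (R + 1) ^ finrank ℝ E * (c - t) ^ ((finrank ℝ E : ℝ) - s) ≤
      ∫ x, (L x - t) ^ (-s) ∂μ := by
  obtain ⟨ε, hε, h⟩ := hcoer t ht
  have hpos := sub_pos_of_mul_one_add_norm_le hε h
  have hs0 : 0 ≤ s := (Nat.cast_nonneg _).trans hs.le
  set δ := c - t
  have hδ : 0 < δ := sub_pos.2 ht
  set ρ := δ / (R + 1)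
  have hρ : 0 < ρ := by positivity
  have hball : ∀ x ∈ ball x₀ ρ, (2 * δ) ^ (-s) ≤ (L x - t) ^ (-s) := fun x hx => by
    have h1 := hLip.le_add_mul x x₀
    have h2 : (R : ℝ) * dist x x₀ ≤ δ := calc
      (R : ℝ) * dist x x₀ ≤ (R + 1) * ρ := by gcongr; linarith; exact (mem_ball.1 hx).le
      _ = δ := mul_div_cancel₀ _ (by positivity)
    exact Real.rpow_le_rpow_of_nonpos (hpos x) (by linarith) (by linarith)
  have hint := integrable_rpow_sub (μ := μ) hLip.continuous hcoer hs ht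
  calc 2 ^ (-s) * μ.real (ball 0 1) / (R + 1) ^ finrank ℝ E * δ ^ ((finrank ℝ E : ℝ) - s)
      = (2 * δ) ^ (-s) * μ.real (ball x₀ ρ) := by
        rw [measureReal_def, measureReal_def, Measure.addHaar_ball_of_pos μ x₀ hρ,
          ENNReal.toReal_mul, ENNReal.toReal_ofReal (by positivity),
          Real.mul_rpow (by norm_num) hδ.le, Real.rpow_sub hδ, Real.rpow_natCast, div_pow, Real.rpow_neg hδ.le]
        field_simp
    _ ≤ ∫ x in ball x₀ ρ, (L x - t) ^ (-s) ∂μ :=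
        setIntegral_ge_of_const_le_real measurableSet_ball measure_ball_lt_top.ne hball
          hint.integrableOn
    _ ≤ ∫ x, (L x - t) ^ (-s) ∂μ :=
        setIntegral_le_integral hint
          (Eventually.of_forall fun x => (Real.rpow_pos_of_pos (hpos x) _).le)

theorem tendsto_integral_rpow_sub_nhdsLT
    (hcoer : ∀ t < c, ∃ ε > 0, ∀ x, ε * (1 + ‖x‖) ≤ L x - t) (hs : (finrank ℝ E : ℝ) < s)
    {R : ℝ≥0} (hLip : LipschitzWith R L) {x₀ : E} (hx₀ : L x₀ = c) :
    Tendsto (fun t => ∫ x, (L x - t) ^ (-s) ∂μ) (𝓝[<] c) atTop := by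
  have hC : 0 < 2 ^ (-s) * μ.real (ball (0 : E) 1) / (R + 1) ^ finrank ℝ E := by
    have : 0 < μ.real (ball (0 : E) 1) :=
      ENNReal.toReal_pos (measure_ball_pos μ _ one_pos).ne' measure_ball_lt_top.ne
    positivity
  have hδ : Tendsto (fun t => c - t) (𝓝[<] c) (𝓝[>] 0) :=
    tendsto_nhdsWithin_of_tendsto_nhds_of_eventually_within _
      (((continuous_sub_left c).tendsto' c 0 (sub_self c)).mono_left nhdsWithin_le_nhds)
      (eventually_nhdsWithin_of_forall fun t ht => mem_Ioi.2 (sub_pos.2 ht))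
  refine tendsto_atTop_mono' _ (eventually_nhdsWithin_of_forall fun t (ht : t < c) =>
    mul_rpow_le_integral_rpow_sub (μ := μ) hcoer hs hLip hx₀ ht) ?_
  exact ((tendsto_rpow_neg_nhdsGT_zero (by linarith)).const_mul_atTop hC).comp hδ

theorem exists_integral_rpow_sub_eq
    (hcoer : ∀ t < c, ∃ ε > 0, ∀ x, ε * (1 + ‖x‖) ≤ L x - t) (hs : (finrank ℝ E : ℝ) < s)
    {R : ℝ≥0} (hLip : LipschitzWith R L) {x₀ : E} (hx₀ : L x₀ = c) {A : ℝ} (hA : 0 < A) :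
    ∃ t < c, ∫ x, (L x - t) ^ (-s) ∂μ = A := by
  obtain ⟨t₁, hJ₁, ht₁⟩ := (((tendsto_integral_rpow_sub_atBot (μ := μ) hLip.continuous hcoer
    hs).eventually (ge_mem_nhds hA)).and (eventually_lt_atBot c)).exists
  obtain ⟨t₂, hJ₂, ht₂⟩ := (((tendsto_integral_rpow_sub_nhdsLT (μ := μ) hcoer hs hLip
    hx₀).eventually_ge_atTop A).and self_mem_nhdsWithin).exists
  obtain ⟨t, ht, hJt⟩ := intermediate_value_uIcc
    ((continuousOn_integral_rpow_sub hLip.continuous hcoer hs).mono fun τ hτ =>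
      hτ.2.trans_lt (max_lt ht₁ ht₂)) (mem_uIcc_of_le hJ₁ hJ₂)
  exact ⟨t, ht.2.trans_lt (max_lt ht₁ ht₂), hJt⟩

end Integral

theorem statement13_general {n : ℕ} (p : ℝ) (hp : 0 < p)
    (ψ : En n → EReal) (hconv : EConvexOn ψ)
    (hbot : ∀ x, ψ x ≠ ⊥)
    (hbdd : Bornology.IsBounded {x | ψ x < ⊤})
    (h0 : (0 : En n) ∈ interior {x | ψ x < ⊤}) :
    (∀ t : ℝ, t < -(ψ 0).toReal →
      (∀ x, 0 < legendre (fun z => ψ z + (t : EReal)) x ∧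
        legendre (fun z => ψ z + (t : EReal)) x < ⊤) ∧
      ConvexOn ℝ Set.univ (fun x => (legendre (fun z => ψ z + (t : EReal)) x).toReal) ∧
      0 < (∫⁻ x, negPow (legendre (fun z => ψ z + (t : EReal)) x) ((n : ℝ) + p)) ∧
      (∫⁻ x, negPow (legendre (fun z => ψ z + (t : EReal)) x) ((n : ℝ) + p)) < ⊤) ∧
    ∀ A : ℝ, 0 < A → ∃ t : ℝ, t < -(ψ 0).toReal ∧
      (∫⁻ x, negPow (legendre (fun z => ψ z + (t : EReal)) x) ((n : ℝ) + p))
        = ENNReal.ofReal A := by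
  have hD0 : (0 : En n) ∈ {x | ψ x < ⊤} := interior_subset h0
  have hf := hconv.bddBelow_toReal_image hbot hbdd h0
  have hcoer := fun t (ht : t < -(ψ 0).toReal) =>
    hconv.exists_mul_one_add_norm_le_realLegendre_sub hbot hbdd h0 ht
  obtain ⟨w, hw⟩ := hconv.exists_realLegendre_eq hbot hbdd h0
  obtain ⟨R, hR₀, hR⟩ := hbdd.exists_pos_norm_le
  lift R to ℝ≥0 using hR₀.le
  have hLip : LipschitzWith R (realLegendre ψ) := lipschitzWith_conjugateOn hf ⟨0, hD0⟩ hR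
  have hs : (finrank ℝ (En n) : ℝ) < n + p := by simpa using hp
  have hleg := legendre_add_coe hbot hbdd hf ⟨0, hD0⟩
  have hI : ∀ t < -(ψ 0).toReal,
      ∫⁻ x, negPow (legendre (fun z => ψ z + (t : EReal)) x) (n + p) =
        ENNReal.ofReal (∫ x, (realLegendre ψ x - t) ^ (-(n + p : ℝ))) := fun t ht => by
    obtain ⟨ε, hε, h⟩ := hcoer t ht
    simp_rw [hleg t]
    exact lintegral_negPow_coe (sub_pos_of_mul_one_add_norm_le hε h)
      (integrable_rpow_sub hLip.continuous hcoer hs ht)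
  refine ⟨fun t ht => ⟨fun x => ?_, ?_, ?_, ?_⟩, fun A hA => ?_⟩
  · obtain ⟨ε, hε, h⟩ := hcoer t ht
    rw [hleg t x]
    exact ⟨EReal.coe_pos.2 (sub_pos_of_mul_one_add_norm_le hε h x), EReal.coe_lt_top _⟩
  · simp_rw [hleg t, EReal.toReal_coe, sub_eq_add_neg]
    exact (convexOn_conjugateOn hbdd hf ⟨0, hD0⟩).add_const _
  · rw [hI t ht]
    exact ENNReal.ofReal_pos.2 (integral_rpow_sub_pos hLip.continuous hcoer hs ht)
  · rw [hI t ht]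
    exact ENNReal.ofReal_lt_top
  · obtain ⟨t, ht, hJ⟩ := exists_integral_rpow_sub_eq (μ := volume) hcoer hs hLip hw hA
    exact ⟨t, ht, by rw [hI t ht, hJ]⟩

theorem statement13 {n : ℕ} (p : ℝ) (hp : 0 < p) (μ : Measure (En n))
    (ψ : En n → EReal) (hconv : EConvexOn ψ) (hlsc : LowerSemicontinuous ψ)
    (hbot : ∀ x, ψ x ≠ ⊥) (hne : ∃ x, ψ x ≠ ⊤)
    (hbdd : Bornology.IsBounded {x | ψ x < ⊤})
    (h0 : (0 : En n) ∈ interior {x | ψ x < ⊤})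
    (hint : Integrable (fun x => (ψ x).toReal) μ) (hμae : ∀ᵐ x ∂μ, ψ x ≠ ⊤) :
    (∀ t : ℝ, t < -(ψ 0).toReal →
      (∀ x, 0 < legendre (fun z => ψ z + (t : EReal)) x ∧
        legendre (fun z => ψ z + (t : EReal)) x < ⊤) ∧
      ConvexOn ℝ Set.univ (fun x => (legendre (fun z => ψ z + (t : EReal)) x).toReal) ∧
      0 < (∫⁻ x, negPow (legendre (fun z => ψ z + (t : EReal)) x) ((n : ℝ) + p)) ∧
      (∫⁻ x, negPow (legendre (fun z => ψ z + (t : EReal)) x) ((n : ℝ) + p)) < ⊤) ∧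
    ∀ A : ℝ, 0 < A → ∃ t : ℝ, t < -(ψ 0).toReal ∧
      (∫⁻ x, negPow (legendre (fun z => ψ z + (t : EReal)) x) ((n : ℝ) + p))
        = ENNReal.ofReal A :=
  statement13_general p hp ψ hconv hbot hbdd h0
end
end

section
/- Let φ: ℝⁿ → (0,∞) be smooth and strongly convex (so ψ = φ* is smooth and strongly convex on the open set L = ∇φ(ℝⁿ)). The hypersurface M = graph_L(ψ) = {(x, ψ(x)) : x ∈ L} ⊆ ℝ^{n+1} is affinely-spherical with center at the origin if and only if there exists a constant C ≠ 0 with φ(y)^{n+2} · det ∇²φ(y) = C for all y ∈ ∇ψ(L). -/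
open MeasureTheory Filter
open scoped ENNReal RealInnerProductSpace

noncomputable section

/-! ### Auxiliary lemmas -/

/-- The determinant is a smooth function on continuous linear endomorphisms. -/
theorem aux_contDiff_det {n : ℕ} : ContDiff ℝ (⊤ : ℕ∞)
    (fun A : En n →L[ℝ] En n => LinearMap.det (A : En n →ₗ[ℝ] En n)) := by
  have hdet : ∀ A : En n →L[ℝ] En n, LinearMap.det (A : En n →ₗ[ℝ] En n)
      = Matrix.det (Matrix.of fun i j => (EuclideanSpace.proj i : En n →L[ℝ] ℝ)
          (A ((EuclideanSpace.basisFun (Fin n) ℝ).toBasis j))) := by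
    intro A
    rw [← LinearMap.det_toMatrix (EuclideanSpace.basisFun (Fin n) ℝ).toBasis]
    congr 1
    ext i j
    simp [LinearMap.toMatrix_apply, EuclideanSpace.proj]
  simp only [hdet, Matrix.det_apply, Matrix.of_apply]
  apply ContDiff.sum
  intro σ _
  simp only [Units.smul_def, zsmul_eq_mul]
  apply ContDiff.mul contDiff_const
  apply contDiff_prod
  intro i _
  exact ((EuclideanSpace.proj (σ i) : En n →L[ℝ] ℝ).contDiff).comp
    ((ContinuousLinearMap.apply ℝ (En n) ((EuclideanSpace.basisFun (Fin n) ℝ).toBasis i)).contDiff)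

/-- Symmetry of the Hessian (the derivative of the gradient). -/
theorem aux_hess_symm {n : ℕ} (f : En n → ℝ) (x : En n) (hf : ContDiffAt ℝ (⊤ : ℕ∞) f x)
    (v w : En n) :
    ⟪(fderiv ℝ (fun z => gradient f z) x) v, w⟫ = ⟪v, (fderiv ℝ (fun z => gradient f z) x) w⟫ := by
  have hev : ∀ᶠ y in nhds x, HasFDerivAt f (fderiv ℝ f y) y := by
    filter_upwards [(hf.of_le (WithTop.coe_le_coe.2 (le_top : (2 : ℕ∞) ≤ ⊤))).eventually (by simp)] with y hy
    exact (hy.differentiableAt (by simp)).hasFDerivAt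
  have hx2 : HasFDerivAt (fderiv ℝ f) (fderiv ℝ (fderiv ℝ f) x) x :=
    ((hf.fderiv_right (WithTop.coe_le_coe.2 le_top)).differentiableAt one_ne_zero).hasFDerivAt
  have hsym := second_derivative_symmetric_of_eventually hev hx2
  have hgd : DifferentiableAt ℝ (fun z => gradient f z) x := by
    have : ContDiffAt ℝ 1 (fun z => gradient f z) x :=
      ((InnerProductSpace.toDual ℝ (En n)).symm.contDiff.contDiffAt).comp x
        (hf.fderiv_right (WithTop.coe_le_coe.2 le_top))
    exact this.differentiableAt one_ne_zero
  set H := fderiv ℝ (fun z => gradient f z) x with hH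
  have key : ∀ u : En n, ∀ p : En n,
      ⟪u, H p⟫ = (fderiv ℝ (fderiv ℝ f) x p) u := by
    intro u p
    have hfun : (fun z => ⟪u, gradient f z⟫) = (fun z => (fderiv ℝ f z) u) := by
      funext z
      rw [real_inner_comm]
      exact InnerProductSpace.toDual_symm_apply
    have d1 : HasFDerivAt (fun z => ⟪u, gradient f z⟫)
        ((innerSL ℝ u).comp H) x :=
      (innerSL ℝ u).hasFDerivAt.comp x hgd.hasFDerivAt
    have d2 : HasFDerivAt (fun z => (fderiv ℝ f z) u)
        ((ContinuousLinearMap.apply ℝ ℝ u).comp (fderiv ℝ (fderiv ℝ f) x)) x :=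
      (ContinuousLinearMap.apply ℝ ℝ u).hasFDerivAt.comp x hx2
    rw [hfun] at d1
    have := d1.unique d2
    have := congrFun (congrArg (fun (c : En n →L[ℝ] ℝ) => (c : En n → ℝ)) this) p
    simpa using this
  calc ⟪H v, w⟫ = ⟪w, H v⟫ := real_inner_comm _ _
    _ = (fderiv ℝ (fderiv ℝ f) x v) w := key w v
    _ = (fderiv ℝ (fderiv ℝ f) x w) v := hsym v w
    _ = ⟪v, H w⟫ := (key v w).symm

/-- Gradient of `z ↦ ⟪∇g z, z⟫ - g z`. -/
theorem aux_grad_h {n : ℕ} (g : En n → ℝ) (x : En n) (hg : ContDiffAt ℝ (⊤ : ℕ∞) g x) :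
    HasGradientAt (fun z => ⟪gradient g z, z⟫ - g z)
      ((fderiv ℝ (fun z => gradient g z) x) x) x := by
  have hsymm := aux_hess_symm g x hg
  set H := fderiv ℝ (fun z => gradient g z) x with hH
  have hgd : DifferentiableAt ℝ (fun z => gradient g z) x :=
    ((((InnerProductSpace.toDual ℝ (En n)).symm.contDiff.contDiffAt).comp x
      (hg.fderiv_right (WithTop.coe_le_coe.2 le_top))).differentiableAt (one_ne_zero : (1 : WithTop ℕ∞) ≠ 0))
  have hgrad : HasGradientAt g (gradient g x) x :=
    (hg.differentiableAt (by simp)).hasGradientAt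
  have d1 : HasFDerivAt (fun z => ⟪gradient g z, z⟫)
      ((fderivInnerCLM ℝ (gradient g x, x)).comp (H.prod (ContinuousLinearMap.id ℝ (En n)))) x :=
    hgd.hasFDerivAt.inner ℝ (hasFDerivAt_id x)
  have d2 : HasFDerivAt (fun z => ⟪gradient g z, z⟫ - g z)
      (((fderivInnerCLM ℝ (gradient g x, x)).comp (H.prod (ContinuousLinearMap.id ℝ (En n))))
        - (InnerProductSpace.toDual ℝ (En n)) (gradient g x)) x :=
    d1.sub hgrad.hasFDerivAt
  rw [hasGradientAt_iff_hasFDerivAt]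
  refine HasFDerivAt.congr_fderiv d2 (Eq.symm ?_)
  ext v
  simp only [InnerProductSpace.toDual_apply_apply, ContinuousLinearMap.coe_comp',
    Function.comp_apply, ContinuousLinearMap.sub_apply, ContinuousLinearMap.prod_apply,
    ContinuousLinearMap.coe_id', id_eq, fderivInnerCLM_apply]
  rw [hsymm v x, real_inner_comm v (H x)]
  ring

/-- A function with zero derivative on an open preconnected set is constant there. -/
theorem aux_const_of_grad_zero {n : ℕ} {L : Set (En n)} (hLopen : IsOpen L)
    (hLconn : IsPreconnected L) {G : En n → ℝ}
    (hG : ∀ x ∈ L, HasFDerivAt G (0 : En n →L[ℝ] ℝ) x) :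
    ∀ x ∈ L, ∀ y ∈ L, G x = G y := by
  have hloc : ∀ x : L, ∀ᶠ y in nhds x, (fun z : L => G z.1) y = G x.1 := by
    rintro ⟨x, hx⟩
    obtain ⟨ε, hε, hball⟩ := Metric.isOpen_iff.1 hLopen x hx
    have hconst : ∀ y ∈ Metric.ball x ε, G y = G x := by
      intro y hy
      refine (convex_ball x ε).is_const_of_fderivWithin_eq_zero (𝕜 := ℝ) ?_ ?_ hy
        (Metric.mem_ball_self hε)
      · intro z hz
        exact ((hG z (hball hz)).differentiableAt).differentiableWithinAt
      · intro z hz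
        rw [fderivWithin_of_isOpen Metric.isOpen_ball hz]
        exact (hG z (hball hz)).fderiv
    have hb : ∀ᶠ y in nhds x, G y = G x := by
      filter_upwards [Metric.isOpen_ball.mem_nhds (Metric.mem_ball_self hε)] with y hy
      exact hconst y hy
    exact (continuousAt_subtype_val (x := (⟨x, hx⟩ : L))).eventually hb
  have hlc : IsLocallyConstant (fun z : L => G z.1) :=
    (IsLocallyConstant.iff_eventually_eq _).2 hloc
  intro x hx y hy
  haveI : PreconnectedSpace L := Subtype.preconnectedSpace hLconn
  exact hlc.apply_eq_of_preconnectedSpace ⟨x, hx⟩ ⟨y, hy⟩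

set_option maxHeartbeats 1000000 in
theorem statement15 {n : ℕ} (φ : En n → ℝ) (hsm : ContDiff ℝ (⊤ : ℕ∞) φ) (hpos : ∀ x, 0 < φ x)
    (hsc : ∀ x : En n, ∀ v : En n, v ≠ 0 → 0 < ⟪(fderiv ℝ (fun y => gradient φ y) x) v, v⟫)
    (L : Set (En n)) (hL : L = Set.range (fun x => gradient φ x)) (hLopen : IsOpen L)
    (g : En n → ℝ) (hg : ContDiffOn ℝ (⊤ : ℕ∞) g L)
    (hleg : ∀ x : En n, g (gradient φ x) = ⟪x, gradient φ x⟫ - φ x)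
    (hdual₁ : ∀ x : En n, gradient g (gradient φ x) = x)
    (hdual₂ : ∀ y ∈ L, gradient φ (gradient g y) = y) :
    (∀ x ∈ L, ∃ u : En n,
      (fderiv ℝ (fun z => gradient g z) x) u
        = gradient (fun z =>
            Real.log (LinearMap.det
              ((fderiv ℝ (fun w => gradient g w) z : En n →L[ℝ] En n) : En n →ₗ[ℝ] En n))) x ∧
      ∃ t : ℝ, ((0 : En n), (0 : ℝ))
        = ((x, g x) : En n × ℝ)
          + t • ((-u, (n : ℝ) + 2 - ⟪u, gradient g x⟫) : En n × ℝ))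
    ↔ ∃ C : ℝ, C ≠ 0 ∧ ∀ y : En n,
        φ y ^ (n + 2) *
          LinearMap.det
            ((fderiv ℝ (fun w => gradient φ w) y : En n →L[ℝ] En n) : En n →ₗ[ℝ] En n)
          = C := by
  classical
  have hn2 : ((n : ℝ) + 2) ≠ 0 := by positivity
  -- abbreviations (as plain functions, to match the goal syntactically)
  set D : En n → ℝ := fun z => LinearMap.det
      ((fderiv ℝ (fun w => gradient g w) z : En n →L[ℝ] En n) : En n →ₗ[ℝ] En n) with hDdef
  set Dφ : En n → ℝ := fun y => LinearMap.det
      ((fderiv ℝ (fun w => gradient φ w) y : En n →L[ℝ] En n) : En n →ₗ[ℝ] En n) with hDφdef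
  set h : En n → ℝ := fun z => ⟪gradient g z, z⟫ - g z with hhdef
  -- membership
  have hmem : ∀ z : En n, gradient φ z ∈ L := by
    intro z; rw [hL]; exact ⟨z, rfl⟩
  -- smoothness facts
  have hφgrad : ContDiff ℝ (⊤ : ℕ∞) (fun z => gradient φ z) :=
    ((InnerProductSpace.toDual ℝ (En n)).symm.contDiff).comp (hsm.fderiv_right (by simp))
  have hgat : ∀ x ∈ L, ContDiffAt ℝ (⊤ : ℕ∞) g x := fun x hx => hg.contDiffAt (hLopen.mem_nhds hx)
  have hgg : ∀ x ∈ L, ContDiffAt ℝ (⊤ : ℕ∞) (fun z => gradient g z) x := fun x hx =>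
    ((InnerProductSpace.toDual ℝ (En n)).symm.contDiff.contDiffAt).comp x
      ((hgat x hx).fderiv_right (by simp))
  have hggd : ∀ x ∈ L, DifferentiableAt ℝ (fun z => gradient g z) x := fun x hx =>
    (hgg x hx).differentiableAt (by simp)
  have hφgd : ∀ y : En n, DifferentiableAt ℝ (fun z => gradient φ z) y := fun y =>
    hφgrad.differentiable (by simp) y
  -- chain rule identity
  have hcomp : ∀ x ∈ L, (fderiv ℝ (fun z => gradient g z) x).comp
      (fderiv ℝ (fun z => gradient φ z) (gradient g x)) = ContinuousLinearMap.id ℝ (En n) := by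
    intro x hx
    have hc : fderiv ℝ ((fun z => gradient g z) ∘ (fun z => gradient φ z)) (gradient g x)
        = (fderiv ℝ (fun z => gradient g z) (gradient φ (gradient g x))).comp
            (fderiv ℝ (fun z => gradient φ z) (gradient g x)) := by
      apply fderiv_comp
      · rw [hdual₂ x hx]; exact hggd x hx
      · exact hφgd _
    have hid : ((fun z => gradient g z) ∘ (fun z => gradient φ z)) = id := by
      funext z; exact hdual₁ z
    rw [hid, fderiv_id, hdual₂ x hx] at hc
    exact hc.symm
  -- determinant identities
  have hdet1 : ∀ x ∈ L, D x * Dφ (gradient g x) = 1 := by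
    intro x hx
    have hc := congrArg (fun T : En n →L[ℝ] En n =>
      LinearMap.det (T : En n →ₗ[ℝ] En n)) (hcomp x hx)
    simpa [ContinuousLinearMap.coe_comp, LinearMap.det_comp] using hc
  have hD0 : ∀ x ∈ L, D x ≠ 0 := fun x hx => left_ne_zero_of_mul_eq_one (hdet1 x hx)
  have hDφval : ∀ x ∈ L, Dφ (gradient g x) = (D x)⁻¹ := by
    intro x hx
    have := hdet1 x hx
    field_simp [hD0 x hx] at this ⊢
    linarith [this]
  -- the function h and positivity
  have hφval : ∀ x ∈ L, φ (gradient g x) = h x := by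
    intro x hx
    have h1 := hleg (gradient g x)
    rw [hdual₂ x hx] at h1
    simp only [hhdef]
    have hc : ⟪gradient g x, x⟫ = ⟪x, gradient g x⟫ := real_inner_comm _ _
    linarith [h1, hc]
  have hhpos : ∀ x ∈ L, 0 < h x := fun x hx => hφval x hx ▸ hpos (gradient g x)
  -- gradient of h
  have hhgrad : ∀ x ∈ L, HasGradientAt h ((fderiv ℝ (fun z => gradient g z) x) x) x :=
    fun x hx => aux_grad_h g x (hgat x hx)
  -- differentiability of D and of Λ = log ∘ D
  have hDdiff : ∀ x ∈ L, DifferentiableAt ℝ D x := by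
    intro x hx
    have hH : ContDiffAt ℝ (⊤ : ℕ∞) (fderiv ℝ (fun z => gradient g z)) x :=
      (hgg x hx).fderiv_right (by simp)
    exact ((aux_contDiff_det.contDiffAt).comp x hH).differentiableAt
      (by simp)
  have hΛdiff : ∀ x ∈ L, DifferentiableAt ℝ (fun z => Real.log (D z)) x := fun x hx =>
    (Real.differentiableAt_log (hD0 x hx)).comp x (hDdiff x hx)
  -- the function G and its gradient
  set G : En n → ℝ := fun z => ((n : ℝ) + 2) * Real.log (h z) - Real.log (D z) with hGdef
  have hGgrad : ∀ x ∈ L, HasGradientAt G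
      ((((n : ℝ) + 2) / h x) • ((fderiv ℝ (fun z => gradient g z) x) x)
        - gradient (fun z => Real.log (D z)) x) x := by
    intro x hx
    have hlog : HasFDerivAt (fun z => Real.log (h z))
        ((h x)⁻¹ • (InnerProductSpace.toDual ℝ (En n)
          ((fderiv ℝ (fun z => gradient g z) x) x))) x :=
      (Real.hasDerivAt_log (ne_of_gt (hhpos x hx))).comp_hasFDerivAt x
        (hhgrad x hx).hasFDerivAt
    have h1 : HasFDerivAt (fun z => ((n : ℝ) + 2) * Real.log (h z))
        (((n : ℝ) + 2) • ((h x)⁻¹ • (InnerProductSpace.toDual ℝ (En n)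
          ((fderiv ℝ (fun z => gradient g z) x) x)))) x := hlog.const_smul ((n : ℝ) + 2)
    have h2 : HasFDerivAt (fun z => Real.log (D z))
        (InnerProductSpace.toDual ℝ (En n) (gradient (fun z => Real.log (D z)) x)) x :=
      ((hΛdiff x hx).hasGradientAt).hasFDerivAt
    have h3 := h1.sub h2
    rw [hasGradientAt_iff_hasFDerivAt]
    refine HasFDerivAt.congr_fderiv h3 (Eq.symm ?_)
    rw [map_sub]
    congr 1
    rw [div_eq_mul_inv, ← smul_smul]
    congr 1
    simp
  -- pointwise characterization of the affine-normal condition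
  have hpoint : ∀ x ∈ L,
      ((∃ u : En n,
        (fderiv ℝ (fun z => gradient g z) x) u
          = gradient (fun z => Real.log (D z)) x ∧
        ∃ t : ℝ, ((0 : En n), (0 : ℝ))
          = ((x, g x) : En n × ℝ)
            + t • ((-u, (n : ℝ) + 2 - ⟪u, gradient g x⟫) : En n × ℝ))
      ↔ (((n : ℝ) + 2) / h x) • ((fderiv ℝ (fun z => gradient g z) x) x)
          - gradient (fun z => Real.log (D z)) x = 0) := by
    intro x hx
    constructor
    · rintro ⟨u, hu, t, ht⟩
      have h1 : (0 : En n) = x + t • (-u) := congrArg Prod.fst ht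
      have h2 : (0 : ℝ) = g x + t * (((n : ℝ) + 2) - ⟪u, gradient g x⟫) :=
        congrArg Prod.snd ht
      have hxtu : x = t • u := by
        rw [smul_neg] at h1
        have := h1.symm
        rwa [add_neg_eq_zero] at this
      have hinner : t * ⟪u, gradient g x⟫ = ⟪gradient g x, x⟫ := by
        have e1 : ⟪t • u, gradient g x⟫ = t * ⟪u, gradient g x⟫ := real_inner_smul_left _ _ _
        rw [← e1, ← hxtu, real_inner_comm]
      have hteq : t * ((n : ℝ) + 2) = h x := by
        simp only [hhdef]
        nlinarith [h2, hinner]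
      have ht0 : t ≠ 0 := by
        intro h0
        rw [h0, zero_mul] at hteq
        exact (ne_of_gt (hhpos x hx)) hteq.symm
      have hueq : u = t⁻¹ • x := by
        rw [hxtu, smul_smul, inv_mul_cancel₀ ht0, one_smul]
      have htinv : t⁻¹ = ((n : ℝ) + 2) / h x := by
        have hteq' : t = h x / ((n : ℝ) + 2) := by
          field_simp
          linarith [hteq]
        rw [hteq', inv_div]
      rw [sub_eq_zero, ← hu, hueq, ContinuousLinearMap.map_smul, htinv]
    · intro hQ
      rw [sub_eq_zero] at hQ
      refine ⟨(((n : ℝ) + 2) / h x) • x, ?_, h x / ((n : ℝ) + 2), ?_⟩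
      · rw [ContinuousLinearMap.map_smul, hQ]
      · have hh0 : h x ≠ 0 := ne_of_gt (hhpos x hx)
        rw [Prod.ext_iff]
        constructor
        · show (0 : En n) = x + (h x / ((n : ℝ) + 2)) • (-((((n : ℝ) + 2) / h x) • x))
          rw [smul_neg, smul_smul, div_mul_div_comm, mul_comm,
            div_self (mul_ne_zero hn2 hh0), one_smul]
          simp
        · show (0 : ℝ) = g x + (h x / ((n : ℝ) + 2))
            * (((n : ℝ) + 2) - ⟪(((n : ℝ) + 2) / h x) • x, gradient g x⟫)
          rw [real_inner_smul_left]
          have hinner : ⟪x, gradient g x⟫ = ⟪gradient g x, x⟫ := real_inner_comm _ _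
          rw [hinner]
          have hval : ⟪gradient g x, x⟫ = h x + g x := by simp only [hhdef]; ring
          rw [hval]
          field_simp
          ring
  -- preconnectedness and a base point
  have hLconn : IsPreconnected L := by
    rw [hL]
    exact isPreconnected_range (hφgrad.continuous)
  have hx₀ : gradient φ 0 ∈ L := hmem 0
  -- sign constancy of D
  have hDsign : ∀ x ∈ L, ∀ y ∈ L, 0 < D x * D y := by
    intro x hx y hy
    have hDcont : ContinuousOn D L := fun z hz =>
      ((hDdiff z hz).continuousAt).continuousWithinAt
    rcases lt_or_gt_of_ne (hD0 x hx) with hxneg | hxpos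
    · rcases lt_or_gt_of_ne (hD0 y hy) with hyneg | hypos
      · exact mul_pos_of_neg_of_neg hxneg hyneg
      · exfalso
        have : (0 : ℝ) ∈ Set.Icc (D x) (D y) := ⟨le_of_lt hxneg, le_of_lt hypos⟩
        obtain ⟨z, hz, hz0⟩ := hLconn.intermediate_value hx hy hDcont this
        exact hD0 z hz hz0
    · rcases lt_or_gt_of_ne (hD0 y hy) with hyneg | hypos
      · exfalso
        have : (0 : ℝ) ∈ Set.Icc (D y) (D x) := ⟨le_of_lt hyneg, le_of_lt hxpos⟩
        obtain ⟨z, hz, hz0⟩ := hLconn.intermediate_value hy hx hDcont this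
        exact hD0 z hz hz0
      · exact mul_pos hxpos hypos
  constructor
  · -- affinely spherical ⇒ constant
    intro hP
    have hG0 : ∀ x ∈ L, HasFDerivAt G (0 : En n →L[ℝ] ℝ) x := by
      intro x hx
      have hQ := (hpoint x hx).1 (hP x hx)
      have := (hGgrad x hx)
      rw [hQ] at this
      have h4 := this.hasFDerivAt
      rwa [map_zero] at h4
    have hGconst := aux_const_of_grad_zero hLopen hLconn hG0
    -- from G constant derive ratio constancy
    have hratio : ∀ x ∈ L, ∀ y ∈ L, h x ^ (n + 2) * D y = h y ^ (n + 2) * D x := by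
      intro x hx y hy
      have hGxy := hGconst x hx y hy
      have hlogeq : Real.log (h x ^ (n + 2) * |D y|) = Real.log (h y ^ (n + 2) * |D x|) := by
        rw [Real.log_mul (pow_ne_zero _ (ne_of_gt (hhpos x hx))) (by simpa using hD0 y hy),
          Real.log_mul (pow_ne_zero _ (ne_of_gt (hhpos y hy))) (by simpa using hD0 x hx),
          Real.log_pow, Real.log_pow, Real.log_abs, Real.log_abs]
        simp only [hGdef] at hGxy
        push_cast
        linarith
      have habs : h x ^ (n + 2) * |D y| = h y ^ (n + 2) * |D x| := by
        have e1 : (0 : ℝ) < h x ^ (n + 2) * |D y| :=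
          mul_pos (pow_pos (hhpos x hx) _) (abs_pos.2 (hD0 y hy))
        have e2 : (0 : ℝ) < h y ^ (n + 2) * |D x| :=
          mul_pos (pow_pos (hhpos y hy) _) (abs_pos.2 (hD0 x hx))
        have := congrArg Real.exp hlogeq
        rwa [Real.exp_log e1, Real.exp_log e2] at this
      rcases lt_or_gt_of_ne (hD0 x hx) with hxneg | hxpos
      · have hyneg : D y < 0 := by
          by_contra hcon
          push_neg at hcon
          have hy' : 0 < D y := lt_of_le_of_ne hcon (Ne.symm (hD0 y hy))
          nlinarith [hDsign x hx y hy]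
        rw [abs_of_neg hyneg, abs_of_neg hxneg] at habs
        linarith
      · have hypos : 0 < D y := by
          by_contra hcon
          push_neg at hcon
          have hy' : D y < 0 := lt_of_le_of_ne hcon (hD0 y hy)
          nlinarith [hDsign x hx y hy]
        rw [abs_of_pos hypos, abs_of_pos hxpos] at habs
        linarith
    refine ⟨h (gradient φ 0) ^ (n + 2) * (D (gradient φ 0))⁻¹, ?_, ?_⟩
    · exact mul_ne_zero (pow_ne_zero _ (ne_of_gt (hhpos _ hx₀))) (inv_ne_zero (hD0 _ hx₀))
    · intro y
      have hxy : gradient φ y ∈ L := hmem y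
      have hgy : gradient g (gradient φ y) = y := hdual₁ y
      have hφy : φ y = h (gradient φ y) := by
        have := hφval _ hxy
        rwa [hgy] at this
      have hDφy : Dφ y = (D (gradient φ y))⁻¹ := by
        have := hDφval _ hxy
        rwa [hgy] at this
      show φ y ^ (n + 2) * Dφ y = _
      rw [hφy, hDφy]
      have hr := hratio (gradient φ y) hxy (gradient φ 0) hx₀
      have d1 := hD0 _ hxy
      have d2 := hD0 _ hx₀
      field_simp
      linarith [hr]
  · -- constant ⇒ affinely spherical
    rintro ⟨C, hC, hCall⟩ x hx
    -- first: G is constant ≡ log C on L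
    have hGval : ∀ z ∈ L, G z = Real.log C := by
      intro z hz
      have h1 : φ (gradient g z) ^ (n + 2) * Dφ (gradient g z) = C := hCall (gradient g z)
      rw [hφval z hz, hDφval z hz] at h1
      have h2 : h z ^ (n + 2) = C * D z := by
        have d := hD0 z hz
        field_simp at h1
        linarith
      simp only [hGdef]
      have h3 : Real.log (h z ^ (n + 2)) = Real.log (C * D z) := by rw [h2]
      rw [Real.log_pow, Real.log_mul hC (hD0 z hz)] at h3
      push_cast at h3
      linarith
    have hQ : (((n : ℝ) + 2) / h x) • ((fderiv ℝ (fun z => gradient g z) x) x)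
        - gradient (fun z => Real.log (D z)) x = 0 := by
      have hev : G =ᶠ[nhds x] fun _ => Real.log C := by
        filter_upwards [hLopen.mem_nhds hx] with z hz
        exact hGval z hz
      have h0 : HasFDerivAt G (0 : En n →L[ℝ] ℝ) x :=
        (hasFDerivAt_const (Real.log C) x).congr_of_eventuallyEq hev
      have h1 := (hGgrad x hx).hasFDerivAt.unique h0
      have h2 := congrArg (InnerProductSpace.toDual ℝ (En n)).symm h1
      rwa [LinearIsometryEquiv.symm_apply_apply, map_zero] at h2
    exact (hpoint x hx).2 hQ
end
end

section
/- Define I⁺: H⁺ → H⁻ by I⁺(x,t) = (x/t, −1/t) and I⁻: H⁻ → H⁺ by I⁻(y,s) = (−y/s, −1/s), where H± = {(x,t) ∈ ℝⁿ × ℝ : ±t > 0}. Then I⁺ and I⁻ are mutually inverse diffeomorphisms, and both transform relative half-spaces to relative half-spaces; consequently, they transform relatively-closed convex subsets of H± to relatively-closed convex subsets of H∓. -/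
open MeasureTheory Filter
open scoped ENNReal RealInnerProductSpace

noncomputable section

/-- The open upper half-space `H⁺ ⊆ ℝⁿ × ℝ`. -/
def Hplus (n : ℕ) : Set (En n × ℝ) := {p | 0 < p.2}

/-- The open lower half-space `H⁻ ⊆ ℝⁿ × ℝ`. -/
def Hminus (n : ℕ) : Set (En n × ℝ) := {p | p.2 < 0}

/-- The fractional-linear map `I⁺(x,t) = (x/t, -1/t)`. -/
def Iplus (n : ℕ) : En n × ℝ → En n × ℝ := fun p => ((p.2)⁻¹ • p.1, -(p.2)⁻¹)

/-- The fractional-linear map `I⁻(y,s) = (-y/s, -1/s)`. -/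
def Iminus (n : ℕ) : En n × ℝ → En n × ℝ := fun p => (-(p.2)⁻¹ • p.1, -(p.2)⁻¹)

/-- `V` is a relative half-space of `H`: `V = {p ∈ H | ⟨p₁,θ⟩ + b p₂ + c ≥ 0}`. -/
def IsRelHalfSpace {n : ℕ} (H V : Set (En n × ℝ)) : Prop :=
  ∃ θ : En n, ∃ b c : ℝ, V = {p ∈ H | 0 ≤ ⟪p.1, θ⟫ + b * p.2 + c}

lemma iminus_iplus {n : ℕ} {p : En n × ℝ} (h : p.2 ≠ 0) : Iminus n (Iplus n p) = p := by
  simp only [Iplus, Iminus, inv_neg, inv_inv, neg_neg, smul_smul]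
  exact Prod.ext (by rw [mul_inv_cancel₀ h, one_smul]) rfl

lemma iplus_iminus {n : ℕ} {p : En n × ℝ} (h : p.2 ≠ 0) : Iplus n (Iminus n p) = p := by
  simp only [Iplus, Iminus, inv_neg, inv_inv, neg_neg, smul_smul]
  exact Prod.ext (by rw [mul_neg, neg_mul, neg_neg, mul_inv_cancel₀ h, one_smul]) rfl

lemma contDiffAt_iplus {n : ℕ} {p : En n × ℝ} (h : p.2 ≠ 0) :
    ContDiffAt ℝ (⊤ : ℕ∞) (Iplus n) p := by
  have h1 : ContDiffAt ℝ (⊤ : ℕ∞) (fun q : En n × ℝ => (q.2)⁻¹) p := contDiffAt_snd.inv h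
  exact ContDiffAt.prodMk (h1.smul contDiffAt_fst) h1.neg

lemma contDiffAt_iminus {n : ℕ} {p : En n × ℝ} (h : p.2 ≠ 0) :
    ContDiffAt ℝ (⊤ : ℕ∞) (Iminus n) p := by
  have h1 : ContDiffAt ℝ (⊤ : ℕ∞) (fun q : En n × ℝ => (q.2)⁻¹) p := contDiffAt_snd.inv h
  exact ContDiffAt.prodMk (h1.neg.smul contDiffAt_fst) h1.neg

lemma image_hs_plus {n : ℕ} (θ : En n) (b c : ℝ) :
    Iplus n '' {p ∈ Hplus n | 0 ≤ ⟪p.1, θ⟫ + b * p.2 + c} =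
      {q ∈ Hminus n | 0 ≤ ⟪q.1, θ⟫ + (-c) * q.2 + b} := by
  ext q
  constructor
  · rintro ⟨p, ⟨hp, hineq⟩, rfl⟩
    have ht : (0:ℝ) < p.2 := hp
    constructor
    · show -(p.2)⁻¹ < 0
      simp [inv_pos.mpr ht]
    · have key : ⟪(Iplus n p).1, θ⟫ + (-c) * (Iplus n p).2 + b
          = p.2⁻¹ * (⟪p.1, θ⟫ + b * p.2 + c) := by
        simp only [Iplus, real_inner_smul_left]
        field_simp [ht.ne']
        ring
      rw [key]
      exact mul_nonneg (inv_nonneg.mpr ht.le) hineq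
  · rintro ⟨hq, hineq⟩
    have hs : q.2 < 0 := hq
    refine ⟨Iminus n q, ⟨?_, ?_⟩, iplus_iminus hs.ne⟩
    · show (0:ℝ) < -(q.2)⁻¹
      simp [inv_neg''.mpr hs]
    · have key : ⟪(Iminus n q).1, θ⟫ + b * (Iminus n q).2 + c
          = (-(q.2)⁻¹) * (⟪q.1, θ⟫ + (-c) * q.2 + b) := by
        simp only [Iminus, real_inner_smul_left]
        field_simp [hs.ne]
        ring
      rw [key]
      exact mul_nonneg (by simp [inv_nonpos.mpr hs.le]) hineq

lemma image_hs_minus {n : ℕ} (θ : En n) (b c : ℝ) :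
    Iminus n '' {p ∈ Hminus n | 0 ≤ ⟪p.1, θ⟫ + b * p.2 + c} =
      {q ∈ Hplus n | 0 ≤ ⟪q.1, θ⟫ + c * q.2 + (-b)} := by
  ext q
  constructor
  · rintro ⟨p, ⟨hp, hineq⟩, rfl⟩
    have hs : p.2 < 0 := hp
    constructor
    · show (0:ℝ) < -(p.2)⁻¹
      simp [inv_neg''.mpr hs]
    · have key : ⟪(Iminus n p).1, θ⟫ + c * (Iminus n p).2 + (-b)
          = (-(p.2)⁻¹) * (⟪p.1, θ⟫ + b * p.2 + c) := by
        simp only [Iminus, real_inner_smul_left]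
        field_simp [hs.ne]
        ring
      rw [key]
      exact mul_nonneg (by simp [inv_nonpos.mpr hs.le]) hineq
  · rintro ⟨hq, hineq⟩
    have ht : (0:ℝ) < q.2 := hq
    refine ⟨Iplus n q, ⟨?_, ?_⟩, iminus_iplus ht.ne'⟩
    · show -(q.2)⁻¹ < 0
      simp [inv_pos.mpr ht]
    · have key : ⟪(Iplus n q).1, θ⟫ + b * (Iplus n q).2 + c
          = q.2⁻¹ * (⟪q.1, θ⟫ + c * q.2 + (-b)) := by
        simp only [Iplus, real_inner_smul_left]
        field_simp [ht.ne']
        ring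
      rw [key]
      exact mul_nonneg (inv_nonneg.mpr ht.le) hineq

lemma convex_image_iplus {n : ℕ} {A : Set (En n × ℝ)} (hA : A ⊆ Hplus n)
    (hconv : Convex ℝ A) : Convex ℝ (Iplus n '' A) := by
  rintro _ ⟨p, hp, rfl⟩ _ ⟨q, hq, rfl⟩ a b ha hb hab
  have ht : (0:ℝ) < p.2 := hA hp
  have ht' : (0:ℝ) < q.2 := hA hq
  set D : ℝ := a / p.2 + b / q.2 with hD
  have hDpos : 0 < D := by
    rcases (by rcases lt_or_eq_of_le ha with h | h; · left; exact h
               · right; rw [← h, zero_add] at hab; rw [hab] at hb ⊢; norm_num :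
        0 < a ∨ 0 < b) with h | h
    · exact add_pos_of_pos_of_nonneg (div_pos h ht) (div_nonneg hb ht'.le)
    · exact add_pos_of_nonneg_of_pos (div_nonneg ha ht.le) (div_pos h ht')
  set lam : ℝ := a / (p.2 * D) with hlam
  set mu : ℝ := b / (q.2 * D) with hmu
  have e1 : lam * p.2 = a / D := by
    rw [hlam]; field_simp
  have e2 : mu * q.2 = b / D := by
    rw [hmu]; field_simp
  have hlm : lam + mu = 1 := by
    rw [hlam, hmu, div_mul_eq_div_div, div_mul_eq_div_div, ← add_div, ← hD,
      div_self hDpos.ne']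
  refine ⟨lam • p + mu • q,
    hconv hp hq (by positivity) (by positivity) hlm, ?_⟩
  have h2 : (lam • p + mu • q).2 = D⁻¹ := by
    show lam * p.2 + mu * q.2 = D⁻¹
    rw [e1, e2, ← add_div, hab, one_div]
  have h2' : (a • Iplus n p + b • Iplus n q).2 = -D := by
    show a * -(p.2)⁻¹ + b * -(q.2)⁻¹ = -D
    rw [hD]; field_simp; ring
  refine Prod.ext ?_ ?_
  · show ((lam • p + mu • q).2)⁻¹ • (lam • p.1 + mu • q.1)
        = a • ((p.2)⁻¹ • p.1) + b • ((q.2)⁻¹ • q.1)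
    rw [h2, inv_inv]
    rw [smul_add, smul_smul, smul_smul, smul_smul, smul_smul]
    congr 1
    · congr 1; rw [hlam]; field_simp [ht.ne', hDpos.ne']
    · congr 1; rw [hmu]; field_simp [ht'.ne', hDpos.ne']
  · show -((lam • p + mu • q).2)⁻¹ = (a • Iplus n p + b • Iplus n q).2
    rw [h2, h2', inv_inv]

lemma convex_image_iminus {n : ℕ} {A : Set (En n × ℝ)} (hA : A ⊆ Hminus n)
    (hconv : Convex ℝ A) : Convex ℝ (Iminus n '' A) := by
  rintro _ ⟨p, hp, rfl⟩ _ ⟨q, hq, rfl⟩ a b ha hb hab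
  have ht : p.2 < 0 := hA hp
  have ht' : q.2 < 0 := hA hq
  set D : ℝ := a / p.2 + b / q.2 with hD
  have hDneg : D < 0 := by
    rcases (by rcases lt_or_eq_of_le ha with h | h; · left; exact h
               · right; rw [← h, zero_add] at hab; rw [hab] at hb ⊢; norm_num :
        0 < a ∨ 0 < b) with h | h
    · exact add_neg_of_neg_of_nonpos (div_neg_of_pos_of_neg h ht)
        (div_nonpos_of_nonneg_of_nonpos hb ht'.le)
    · exact add_neg_of_nonpos_of_neg (div_nonpos_of_nonneg_of_nonpos ha ht.le)
        (div_neg_of_pos_of_neg h ht')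
  set lam : ℝ := a / (p.2 * D) with hlam
  set mu : ℝ := b / (q.2 * D) with hmu
  have e1 : lam * p.2 = a / D := by
    rw [hlam]; field_simp [ht.ne, hDneg.ne]
  have e2 : mu * q.2 = b / D := by
    rw [hmu]; field_simp [ht'.ne, hDneg.ne]
  have hlm : lam + mu = 1 := by
    rw [hlam, hmu, div_mul_eq_div_div, div_mul_eq_div_div, ← add_div, ← hD,
      div_self hDneg.ne]
  refine ⟨lam • p + mu • q,
    hconv hp hq (div_nonneg ha (mul_pos_of_neg_of_neg ht hDneg).le)
      (div_nonneg hb (mul_pos_of_neg_of_neg ht' hDneg).le) hlm, ?_⟩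
  have h2 : (lam • p + mu • q).2 = D⁻¹ := by
    show lam * p.2 + mu * q.2 = D⁻¹
    rw [e1, e2, ← add_div, hab, one_div]
  have h2' : (a • Iminus n p + b • Iminus n q).2 = -D := by
    show a * -(p.2)⁻¹ + b * -(q.2)⁻¹ = -D
    rw [hD]; field_simp; ring
  refine Prod.ext ?_ ?_
  · show -((lam • p + mu • q).2)⁻¹ • (lam • p.1 + mu • q.1)
        = a • (-(p.2)⁻¹ • p.1) + b • (-(q.2)⁻¹ • q.1)
    rw [h2, inv_inv]
    rw [smul_add, smul_smul, smul_smul, smul_smul, smul_smul]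
    congr 1
    · congr 1; rw [hlam]; field_simp [ht.ne, hDneg.ne]
    · congr 1; rw [hmu]; field_simp [ht'.ne, hDneg.ne]
  · show -((lam • p + mu • q).2)⁻¹ = (a • Iminus n p + b • Iminus n q).2
    rw [h2, h2', inv_inv]

lemma closure_image_iplus {n : ℕ} {A : Set (En n × ℝ)} (hA : A ⊆ Hplus n)
    (hcl : closure A ∩ Hplus n ⊆ A) :
    closure (Iplus n '' A) ∩ Hminus n ⊆ Iplus n '' A := by
  rintro q ⟨hqc, hq⟩
  have hs : q.2 < 0 := hq
  have hcont : ContinuousAt (Iminus n) q := (contDiffAt_iminus hs.ne).continuousAt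
  have hmem : Iminus n q ∈ closure (Iminus n '' (Iplus n '' A)) :=
    hcont.continuousWithinAt.mem_closure_image hqc
  have himg : Iminus n '' (Iplus n '' A) = A := by
    rw [Set.image_image]
    rw [Set.image_congr (fun a ha => iminus_iplus (hA ha).ne'), Set.image_id']
  rw [himg] at hmem
  have hH : Iminus n q ∈ Hplus n := by
    show (0:ℝ) < -(q.2)⁻¹
    simp [inv_neg''.mpr hs]
  exact ⟨Iminus n q, hcl ⟨hmem, hH⟩, iplus_iminus hs.ne⟩

lemma closure_image_iminus {n : ℕ} {A : Set (En n × ℝ)} (hA : A ⊆ Hminus n)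
    (hcl : closure A ∩ Hminus n ⊆ A) :
    closure (Iminus n '' A) ∩ Hplus n ⊆ Iminus n '' A := by
  rintro q ⟨hqc, hq⟩
  have ht : (0:ℝ) < q.2 := hq
  have hcont : ContinuousAt (Iplus n) q := (contDiffAt_iplus ht.ne').continuousAt
  have hmem : Iplus n q ∈ closure (Iplus n '' (Iminus n '' A)) :=
    hcont.continuousWithinAt.mem_closure_image hqc
  have himg : Iplus n '' (Iminus n '' A) = A := by
    rw [Set.image_image]
    rw [Set.image_congr (fun a ha => iplus_iminus (hA ha).ne), Set.image_id']
  rw [himg] at hmem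
  have hH : Iplus n q ∈ Hminus n := by
    show -(q.2)⁻¹ < 0
    simp [inv_pos.mpr ht]
  exact ⟨Iplus n q, hcl ⟨hmem, hH⟩, iminus_iplus ht.ne'⟩

theorem statement17 (n : ℕ) :
    (∀ p ∈ Hplus n, Iplus n p ∈ Hminus n ∧ Iminus n (Iplus n p) = p) ∧
    (∀ p ∈ Hminus n, Iminus n p ∈ Hplus n ∧ Iplus n (Iminus n p) = p) ∧
    ContDiffOn ℝ (⊤ : ℕ∞) (Iplus n) (Hplus n) ∧ ContDiffOn ℝ (⊤ : ℕ∞) (Iminus n) (Hminus n) ∧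
    (∀ V : Set (En n × ℝ), IsRelHalfSpace (Hplus n) V →
      IsRelHalfSpace (Hminus n) (Iplus n '' V)) ∧
    (∀ V : Set (En n × ℝ), IsRelHalfSpace (Hminus n) V →
      IsRelHalfSpace (Hplus n) (Iminus n '' V)) ∧
    (∀ A : Set (En n × ℝ), A ⊆ Hplus n → Convex ℝ A → closure A ∩ Hplus n ⊆ A →
      Convex ℝ (Iplus n '' A) ∧ closure (Iplus n '' A) ∩ Hminus n ⊆ Iplus n '' A) ∧
    (∀ A : Set (En n × ℝ), A ⊆ Hminus n → Convex ℝ A → closure A ∩ Hminus n ⊆ A →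
      Convex ℝ (Iminus n '' A) ∧ closure (Iminus n '' A) ∩ Hplus n ⊆ Iminus n '' A) := by
  refine ⟨fun p hp => ⟨?_, iminus_iplus (ne_of_gt hp)⟩,
    fun p hp => ⟨?_, iplus_iminus (ne_of_lt hp)⟩,
    fun p hp => (contDiffAt_iplus (ne_of_gt hp)).contDiffWithinAt,
    fun p hp => (contDiffAt_iminus (ne_of_lt hp)).contDiffWithinAt,
    ?_, ?_,
    fun A hA hconv hcl => ⟨convex_image_iplus hA hconv, closure_image_iplus hA hcl⟩,
    fun A hA hconv hcl => ⟨convex_image_iminus hA hconv, closure_image_iminus hA hcl⟩⟩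
  · show -(p.2)⁻¹ < 0
    simp [inv_pos.mpr (show (0:ℝ) < p.2 from hp)]
  · show (0:ℝ) < -(p.2)⁻¹
    simp [inv_neg''.mpr (show p.2 < (0:ℝ) from hp)]
  · rintro V ⟨θ, b, c, rfl⟩
    exact ⟨θ, -c, b, image_hs_plus θ b c⟩
  · rintro V ⟨θ, b, c, rfl⟩
    exact ⟨θ, c, -b, image_hs_minus θ b c⟩
end
end

section
/- Let φ: ℝⁿ → (0, +∞] be a proper convex function and ψ = φ*. Then I⁺(epigraph(φ)) = epigraph(ψ)° ∩ H⁻, where I⁺(x,t) = (x/t, −1/t), H⁻ = {(y,s) : s < 0}, and ° denotes the polar body in ℝ^{n+1}. Moreover, if ψ(0) < ∞ then epigraph(ψ)° \ H⁻ = {(x, 0) : x ∈ dom(ψ)°}. -/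
open MeasureTheory Filter
open scoped ENNReal RealInnerProductSpace

noncomputable section

/-- The epigraph of an `ℝ ∪ {+∞}`-valued function, as a subset of `ℝⁿ × ℝ`. -/
def epiE {n : ℕ} (F : En n → EReal) : Set (En n × ℝ) := {p | F p.1 ≤ (p.2 : EReal)}

/-- The polar body of a subset of `ℝⁿ × ℝ = ℝ^{n+1}`. -/
def polarP {n : ℕ} (S : Set (En n × ℝ)) : Set (En n × ℝ) :=
  {q | ∀ p ∈ S, ⟪q.1, p.1⟫ + q.2 * p.2 ≤ 1}

/-- The polar body of a subset of `ℝⁿ`. -/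
def polarE {n : ℕ} (S : Set (En n)) : Set (En n) := {y | ∀ x ∈ S, ⟪y, x⟫ ≤ 1}

/-
By the Fenchel–Moreau theorem, `(x, t)` lies in the epigraph of `φ` iff `⟪x, y⟫ - c ≤ t` for every
`(y, c)` in the epigraph of `ψ = φ*`. It follows by separating a point from the closed convex
epigraph; a vertical separating hyperplane is first tilted by an affine minorant of `φ`.
For `s < 0` the preimage of `(y, s)` under `I⁺` is `I⁻(y, s) = (t y, t)` with `t = -1/s > 0`, and
multiplying by `-s` turns those inequalities into the polarity conditions `⟪y, z⟫ + s c ≤ 1`.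
If `ψ 0 < ∞`, the epigraph of `ψ` contains the vertical ray above `0`, which forces `s ≤ 0` on its
polar; at `s = 0` the polarity conditions only see `dom ψ`.
-/

lemma StrongDual.exists_inner_add_mul_eq {E : Type*} [NormedAddCommGroup E] [InnerProductSpace ℝ E]
    [CompleteSpace E] (f : StrongDual ℝ (E × ℝ)) :
    ∃ (y : E) (b : ℝ), ∀ q : E × ℝ, f q = ⟪q.1, y⟫ + b * q.2 := by
  refine ⟨(InnerProductSpace.toDual ℝ E).symm (f.comp (.inl ℝ E ℝ)), f (0, 1), fun q => ?_⟩
  rw [← f.comp_inl_add_comp_inr, real_inner_comm, InnerProductSpace.toDual_symm_apply]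
  have : ((0 : E), q.2) = q.2 • ((0 : E), (1 : ℝ)) := by simp
  simp only [ContinuousLinearMap.comp_apply, ContinuousLinearMap.inr_apply]
  rw [this, map_smul, smul_eq_mul, mul_comm]

section

variable {n : ℕ}

lemma legendre_le_coe_iff {φ : En n → EReal} {y : En n} {c : ℝ} :
    legendre φ y ≤ c ↔ ∀ p ∈ epiE φ, ⟪p.1, y⟫ - p.2 ≤ c := by
  simp only [legendre, iSup_le_iff, Subtype.forall, Prod.forall, epiE, Set.mem_ofPred_eq]
  refine forall_congr' fun x => ?_
  generalize φ x = a
  induction a using EReal.rec with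
  | bot =>
    refine ⟨fun h => absurd (h bot_lt_top) (by simp), fun h => ?_⟩
    linarith [h (⟪x, y⟫ - c - 1) bot_le]
  | coe v =>
    simp only [EReal.coe_lt_top, true_implies, EReal.coe_le_coe_iff, ← EReal.coe_sub]
    exact ⟨fun h r hr => by linarith, fun h => h v le_rfl⟩
  | top => simp

lemma isClosed_epiE {φ : En n → EReal} (hφ : LowerSemicontinuous φ) : IsClosed (epiE φ) :=
  hφ.isClosed_epigraph.preimage
    (continuous_fst.prodMk (continuous_coe_real_ereal.comp continuous_snd))

lemma EConvexOn.convex_epiE {φ : En n → EReal} (hφ : EConvexOn φ) : Convex ℝ (epiE φ) := by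
  rintro ⟨x, s⟩ (hx : φ x ≤ s) ⟨y, t⟩ (hy : φ y ≤ t) a b ha hb hab
  calc φ (a • x + b • y) ≤ (a : EReal) * φ x + (b : EReal) * φ y := hφ x y a b ha hb hab
    _ ≤ (a : EReal) * s + (b : EReal) * t := by gcongr
    _ = ((a * s + b * t : ℝ) : EReal) := by norm_cast

lemma exists_separation_of_notMem_epiE {φ : En n → EReal} (hconv : EConvexOn φ)
    (hlsc : LowerSemicontinuous φ) {p : En n × ℝ} (hp : p ∉ epiE φ) :
    ∃ (y : En n) (b u : ℝ), ⟪p.1, y⟫ + b * p.2 < u ∧ ∀ q ∈ epiE φ, u < ⟪q.1, y⟫ + b * q.2 := by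
  obtain ⟨f, u, hfp, hf⟩ :=
    geometric_hahn_banach_point_closed hconv.convex_epiE (isClosed_epiE hlsc) hp
  obtain ⟨y, b, hfyb⟩ := f.exists_inner_add_mul_eq
  exact ⟨y, b, u, hfyb p ▸ hfp, fun q hq => hfyb q ▸ hf q hq⟩

lemma nonneg_of_forall_mem_epiE_lt {φ : En n → EReal} (hne : (epiE φ).Nonempty) {y : En n}
    {b u : ℝ} (h : ∀ q ∈ epiE φ, u < ⟪q.1, y⟫ + b * q.2) : 0 ≤ b := by
  obtain ⟨⟨x, s⟩, hs : φ x ≤ s⟩ := hne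
  by_contra! hb
  have hgap : u < ⟪x, y⟫ + b * s := h (x, s) hs
  set k := (⟪x, y⟫ + b * s - u) / -b
  have hk : b * k = u - ⟪x, y⟫ - b * s := by simp only [k]; field_simp [hb.ne]; ring
  have hk_nonneg : 0 ≤ k := div_nonneg (by linarith) (by linarith)
  have := h (x, s + k) (hs.trans (by exact_mod_cast le_add_of_nonneg_right hk_nonneg))
  simp only at this
  linarith [mul_add b s k]

lemma mem_epiE_legendre_of_forall_lt {φ : En n → EReal} {y : En n} {b u : ℝ} (hb : 0 < b)
    (h : ∀ q ∈ epiE φ, u < ⟪q.1, y⟫ + b * q.2) :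
    ((-b⁻¹) • y, -(u / b)) ∈ epiE (legendre φ) := by
  refine legendre_le_coe_iff.2 fun q hq => ?_
  have hscale : ⟪q.1, (-b⁻¹) • y⟫ - q.2 + u / b = -((⟪q.1, y⟫ + b * q.2 - u) / b) := by
    rw [real_inner_smul_right]; field_simp; ring
  have := div_pos (sub_pos.2 (h q hq)) hb
  linarith

lemma epiE_legendre_nonempty {φ : En n → EReal} (hbot : ∀ x, φ x ≠ ⊥) (hconv : EConvexOn φ)
    (hlsc : LowerSemicontinuous φ) (hne : (epiE φ).Nonempty) :
    (epiE (legendre φ)).Nonempty := by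
  obtain ⟨⟨x, s⟩, hs : φ x ≤ s⟩ := hne
  set a := (φ x).toReal
  have ha : φ x = a := (EReal.coe_toReal (hs.trans_lt (EReal.coe_lt_top s)).ne (hbot x)).symm
  have hp : (x, a - 1) ∉ epiE φ := by
    change ¬ φ x ≤ ((a - 1 : ℝ) : EReal)
    rw [ha, EReal.coe_le_coe_iff]
    linarith
  obtain ⟨y, b, u, hlt, h⟩ := exists_separation_of_notMem_epiE hconv hlsc hp
  have hb : 0 < b := by
    have := h (x, a) ha.le
    simp only at hlt this
    linarith [mul_sub b a 1]
  exact ⟨_, mem_epiE_legendre_of_forall_lt hb h⟩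

lemma exists_mem_epiE_legendre_lt_of_vertical {φ : En n → EReal} {q₁ : En n × ℝ}
    (hq₁ : q₁ ∈ epiE (legendre φ)) {x y : En n} {u : ℝ} (hx : ⟪x, y⟫ < u)
    (h : ∀ q ∈ epiE φ, u < ⟪q.1, y⟫) (t : ℝ) :
    ∃ q ∈ epiE (legendre φ), t < ⟪x, q.1⟫ - q.2 := by
  -- tilt the affine minorant `q₁` along the separating direction `(-y, -u)`
  obtain ⟨lam, hlam_pos, hlam⟩ := exists_pos_lt_mul (sub_pos.2 hx) (t - (⟪x, q₁.1⟫ - q₁.2))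
  refine ⟨(q₁.1 - lam • y, q₁.2 - lam * u), legendre_le_coe_iff.2 fun q hq => ?_, ?_⟩
  · have h₁ := legendre_le_coe_iff.1 hq₁ q hq
    have h₂ := mul_le_mul_of_nonneg_left (h q hq).le hlam_pos.le
    simp only [inner_sub_right, real_inner_smul_right]
    linarith
  · simp only [inner_sub_right, real_inner_smul_right]
    linarith [mul_sub lam u ⟪x, y⟫]

theorem mem_epiE_iff_forall_mem_epiE_legendre {φ : En n → EReal} (hbot : ∀ x, φ x ≠ ⊥)
    (hconv : EConvexOn φ) (hlsc : LowerSemicontinuous φ) {p : En n × ℝ} :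
    p ∈ epiE φ ↔ ∀ q ∈ epiE (legendre φ), ⟪p.1, q.1⟫ - q.2 ≤ p.2 := by
  refine ⟨fun hp q hq => by linarith [legendre_le_coe_iff.1 hq p hp], fun hp => ?_⟩
  by_contra hnot
  suffices ∃ q ∈ epiE (legendre φ), p.2 < ⟪p.1, q.1⟫ - q.2 by
    obtain ⟨q, hq, hlt⟩ := this
    linarith [hp q hq]
  rcases (epiE φ).eq_empty_or_nonempty with hempty | hne
  · refine ⟨(0, -p.2 - 1), legendre_le_coe_iff.2 (by simp [hempty]), by simp⟩
  obtain ⟨y, b, u, hlt, h⟩ := exists_separation_of_notMem_epiE hconv hlsc hnot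
  rcases (nonneg_of_forall_mem_epiE_lt hne h).lt_or_eq with hb | rfl
  · refine ⟨_, mem_epiE_legendre_of_forall_lt hb h, ?_⟩
    have : p.2 < (u - ⟪p.1, y⟫) / b := by rw [lt_div_iff₀ hb]; linarith
    simp only [real_inner_smul_right]
    field_simp at this ⊢
    linarith
  · simp only [zero_mul, add_zero] at hlt h
    obtain ⟨q₁, hq₁⟩ := epiE_legendre_nonempty hbot hconv hlsc hne
    exact exists_mem_epiE_legendre_lt_of_vertical hq₁ hlt h p.2

lemma epiE_subset_Hplus {φ : En n → EReal} (hpos : ∀ x, 0 < φ x) : epiE φ ⊆ Hplus n :=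
  fun p (hp : φ p.1 ≤ p.2) => EReal.coe_pos.1 ((hpos p.1).trans_le hp)

lemma Iminus_Iplus {p : En n × ℝ} (hp : p.2 ≠ 0) : Iminus n (Iplus n p) = p := by
  simp [Iplus, Iminus, smul_smul, hp]

lemma Iplus_Iminus {q : En n × ℝ} (hq : q.2 ≠ 0) : Iplus n (Iminus n q) = q := by
  simp [Iplus, Iminus, smul_smul, hq]

lemma mem_image_Iplus_iff {S : Set (En n × ℝ)} (hS : S ⊆ Hplus n) {q : En n × ℝ} :
    q ∈ Iplus n '' S ↔ Iminus n q ∈ S ∧ q ∈ Hminus n := by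
  constructor
  · rintro ⟨p, hp, rfl⟩
    have hp0 : 0 < p.2 := hS hp
    exact ⟨by rwa [Iminus_Iplus hp0.ne'], show -(p.2)⁻¹ < 0 by simpa using hp0⟩
  · rintro ⟨hq, hq0 : q.2 < 0⟩
    exact ⟨Iminus n q, hq, Iplus_Iminus hq0.ne⟩

lemma mem_polarP_iff_of_neg {S : Set (En n × ℝ)} {q : En n × ℝ} (hq : q.2 < 0) :
    q ∈ polarP S ↔ ∀ p ∈ S, ⟪(Iminus n q).1, p.1⟫ - p.2 ≤ (Iminus n q).2 := by
  refine forall₂_congr fun p _ => ?_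
  have hscale : -(q.2)⁻¹ * ⟪q.1, p.1⟫ - p.2 = -(q.2)⁻¹ * (⟪q.1, p.1⟫ + q.2 * p.2) := by
    field_simp [hq.ne]; ring
  rw [Iminus, real_inner_smul_left, hscale, mul_le_iff_le_one_right (by simpa using hq)]

lemma polarP_epiE_diff_Hminus {ψ : En n → EReal} (h0 : ψ 0 < ⊤) :
    polarP (epiE ψ) \ Hminus n = {p | p.2 = 0 ∧ p.1 ∈ polarE {x | ψ x < ⊤}} := by
  ext ⟨y, s⟩
  simp only [Set.mem_sdiff, polarP, Hminus, polarE, epiE, Set.mem_ofPred_eq, not_lt, Prod.forall]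
  constructor
  · rintro ⟨hpol, hs⟩
    have hs0 : s = 0 := by
      refine le_antisymm ?_ hs
      by_contra! hs_pos
      set c := max (ψ 0).toReal (2 / s)
      have hc : s * c ≤ 1 := by
        simpa using hpol 0 c ((EReal.le_coe_toReal h0.ne).trans (by exact_mod_cast le_max_left _ _))
      have : 2 ≤ s * c := by rw [← div_le_iff₀' hs_pos]; exact le_max_right _ _
      linarith
    refine ⟨hs0, fun x hx => ?_⟩
    simpa [hs0] using hpol x _ (EReal.le_coe_toReal hx.ne)
  · rintro ⟨rfl, hpol⟩
    exact ⟨fun x c hc => by simpa using hpol x (hc.trans_lt (EReal.coe_lt_top c)), le_rfl⟩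

end

theorem statement18_general {n : ℕ} (φ : En n → EReal) (hpos : ∀ x, 0 < φ x)
    (hconv : EConvexOn φ) (hlsc : LowerSemicontinuous φ) :
    Iplus n '' epiE φ = polarP (epiE (legendre φ)) ∩ Hminus n ∧
    (legendre φ 0 < ⊤ →
      polarP (epiE (legendre φ)) \ Hminus n
        = {p : En n × ℝ | p.2 = 0 ∧ p.1 ∈ polarE {x | legendre φ x < ⊤}}) := by
  refine ⟨?_, polarP_epiE_diff_Hminus⟩
  have hbot : ∀ x, φ x ≠ ⊥ := fun x => ne_bot_of_gt (hpos x)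
  ext q
  rw [mem_image_Iplus_iff (epiE_subset_Hplus hpos), Set.mem_inter_iff]
  refine and_congr_left fun hq => ?_
  rw [mem_epiE_iff_forall_mem_epiE_legendre hbot hconv hlsc, mem_polarP_iff_of_neg hq]

theorem statement18 {n : ℕ} (φ : En n → EReal) (hpos : ∀ x, 0 < φ x)
    (hconv : EConvexOn φ) (hlsc : LowerSemicontinuous φ) (hne : ∃ x, φ x ≠ ⊤) :
    Iplus n '' epiE φ = polarP (epiE (legendre φ)) ∩ Hminus n ∧
    (legendre φ 0 < ⊤ →
      polarP (epiE (legendre φ)) \ Hminus n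
        = {p : En n × ℝ | p.2 = 0 ∧ p.1 ∈ polarE {x | legendre φ x < ⊤}}) :=
  statement18_general φ hpos hconv hlsc
end
end
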